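/- arXiv:1906.12305 — 4 statements merged into one kernel-verified Lean document; each statement's English description precedes it below -/
import Mathlib

section
/- Let d ≥ 2, let S ⊆ ℝ be a nonempty open interval, and let φ : S → ℝ satisfy φ > 0 on S and φ(t)² = (t² + b t + c)/a for real constants a ≠ 0, b, c. Let ∂V^{d+1} = {(x,t) ∈ ℝ^d × ℝ : ‖x‖ = φ(t), t ∈ S}. Then the space Π_n(∂V^{d+1}) of restrictions to ∂V^{d+1} of polynomials of total degree at most n in d+1 variables has dimension C(n+d, d) + C(n+d−1, d). -/
open MeasureTheory MvPolynomial

noncomputable section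

/-- The quadratic surface of revolution `∂V^{d+1} = {(x,t) : ‖x‖ = φ(t), t ∈ S}`. -/
def quadSurface (d : ℕ) (Sset : Set ℝ) (φ : ℝ → ℝ) :
    Set (EuclideanSpace ℝ (Fin d) × ℝ) :=
  {z | z.2 ∈ Sset ∧ ‖z.1‖ = φ z.2}

/-- Restriction of polynomials in `d+1` variables to a subset of `ℝ^d × ℝ`,
as a linear map into the space of functions on that subset. -/
def restrictLin (d : ℕ) (A : Set (EuclideanSpace ℝ (Fin d) × ℝ)) :
    MvPolynomial (Fin (d + 1)) ℝ →ₗ[ℝ] (A → ℝ) where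
  toFun p := fun z =>
    MvPolynomial.eval
      (Fin.snoc (z : EuclideanSpace ℝ (Fin d) × ℝ).1
        (z : EuclideanSpace ℝ (Fin d) × ℝ).2) p
  map_add' p q := by funext z; simp
  map_smul' r p := by funext z; simp [MvPolynomial.smul_eval]

def fdeg {k : ℕ} (m : Fin k →₀ ℕ) : ℕ := m.sum fun _ e => e

lemma fdeg_eq_sum {k : ℕ} (m : Fin k →₀ ℕ) : fdeg m = ∑ i, m i :=
  Finsupp.sum_fintype _ _ (fun _ => rfl)

lemma fdeg_cons {k : ℕ} (y : ℕ) (s : Fin k →₀ ℕ) : fdeg (Finsupp.cons y s) = y + fdeg s := by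
  rw [fdeg_eq_sum, fdeg_eq_sum, Fin.sum_univ_succ, Finsupp.cons_zero]
  simp [Finsupp.cons_succ]

lemma fdeg_tail {k : ℕ} (m : Fin (k+1) →₀ ℕ) : fdeg m = m 0 + fdeg (Finsupp.tail m) := by
  conv_lhs => rw [← Finsupp.cons_tail m]
  exact fdeg_cons _ _

def eSlack (k n : ℕ) : {m : Fin k →₀ ℕ // fdeg m ≤ n} ≃ {m : Fin (k+1) →₀ ℕ // fdeg m = n} where
  toFun m := ⟨Finsupp.cons (n - fdeg m.1) m.1, by rw [fdeg_cons]; have := m.2; omega⟩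
  invFun m := ⟨Finsupp.tail m.1, by have h := fdeg_tail m.1; have := m.2; omega⟩
  left_inv m := by ext1; exact Finsupp.tail_cons _ _
  right_inv m := by
    ext1
    have h := fdeg_tail m.1
    have h2 := m.2
    simp only [Finsupp.tail_cons]
    have : n - fdeg (Finsupp.tail m.1) = m.1 0 := by omega
    rw [this, Finsupp.cons_tail]

lemma card_fdeg_eq (k n : ℕ) : Nat.card {m : Fin k →₀ ℕ // fdeg m = n} = (k + n - 1).choose n := by
  have e : {m : Fin k →₀ ℕ // fdeg m = n} ≃ Sym (Fin k) n :=
    (Equiv.subtypeEquivRight (fun m => by rfl)).trans (Sym.equivNatSum (Fin k) n).symm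
  rw [Nat.card_congr e, Nat.card_eq_fintype_card, Sym.card_sym_eq_choose, Fintype.card_fin]

lemma card_fdeg_le (k n : ℕ) : Nat.card {m : Fin k →₀ ℕ // fdeg m ≤ n} = (n + k).choose k := by
  rw [Nat.card_congr (eSlack k n), card_fdeg_eq]
  have h1 : k + 1 + n - 1 = n + k := by omega
  rw [h1, ← Nat.choose_symm (by omega : n ≤ n + k)]
  congr 1
  omega

instance fdegEqFinite (k n : ℕ) : Finite {m : Fin k →₀ ℕ // fdeg m = n} :=
  Finite.of_equiv _ ((Equiv.subtypeEquivRight (fun m => by rfl)).trans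
    (Sym.equivNatSum (Fin k) n).symm).symm

instance fdegLeFinite (k n : ℕ) : Finite {m : Fin k →₀ ℕ // fdeg m ≤ n} :=
  Finite.of_equiv _ (eSlack k n).symm

instance fdegLtFinite (k n : ℕ) : Finite {m : Fin k →₀ ℕ // fdeg m + 1 ≤ n} :=
  Finite.of_injective (fun v => (⟨v.1, by have := v.2; omega⟩ : {m : Fin k →₀ ℕ // fdeg m ≤ n}))
    (fun a b h => by
      ext1
      have : ((⟨a.1, by have := a.2; omega⟩ : {m : Fin k →₀ ℕ // fdeg m ≤ n}) : Fin k →₀ ℕ) =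
          ((⟨b.1, by have := b.2; omega⟩ : {m : Fin k →₀ ℕ // fdeg m ≤ n}) : Fin k →₀ ℕ) :=
        congrArg Subtype.val h
      exact this)

def eB (d n : ℕ) : {m : Fin (d+1) →₀ ℕ // fdeg m ≤ n ∧ m 0 ≤ 1} ≃
    {v : Fin d →₀ ℕ // fdeg v ≤ n} ⊕ {v : Fin d →₀ ℕ // fdeg v + 1 ≤ n} where
  toFun m := if h : m.1 0 = 0
    then Sum.inl ⟨Finsupp.tail m.1, by have := fdeg_tail m.1; have := m.2.1; omega⟩
    else Sum.inr ⟨Finsupp.tail m.1, by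
      have h1 := fdeg_tail m.1; have h2 := m.2.1; have h3 := m.2.2; omega⟩
  invFun v := v.elim
    (fun v => ⟨Finsupp.cons 0 v.1, by
      constructor
      · rw [fdeg_cons]; have := v.2; omega
      · rw [Finsupp.cons_zero]; exact zero_le_one⟩)
    (fun v => ⟨Finsupp.cons 1 v.1, by
      constructor
      · rw [fdeg_cons]; have := v.2; omega
      · rw [Finsupp.cons_zero]⟩)
  left_inv m := by
    by_cases h : m.1 0 = 0
    · simp only [h, dif_pos]
      ext1
      simp only [Sum.elim_inl]
      conv_rhs => rw [← Finsupp.cons_tail m.1, h]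
    · simp only [h, dif_neg, not_false_iff]
      ext1
      simp only [Sum.elim_inr]
      have h1 : m.1 0 = 1 := by have := m.2.2; omega
      conv_rhs => rw [← Finsupp.cons_tail m.1, h1]
  right_inv v := by
    rcases v with v | v
    · simp only [Sum.elim_inl]
      simp only [Finsupp.cons_zero, eq_self_iff_true, ↓reduceDIte]
      simp [Finsupp.tail_cons]
    · simp only [Sum.elim_inr]
      simp only [Finsupp.cons_zero, one_ne_zero, ↓reduceDIte]
      simp [Finsupp.tail_cons]

lemma card_B (d n : ℕ) (hd : 1 ≤ d) : Nat.card {m : Fin (d+1) →₀ ℕ // fdeg m ≤ n ∧ m 0 ≤ 1} =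
    (n + d).choose d + (n + d - 1).choose d := by
  rw [Nat.card_congr (eB d n), Nat.card_sum, card_fdeg_le]
  congr 1
  cases n with
  | zero =>
    have : IsEmpty {v : Fin d →₀ ℕ // fdeg v + 1 ≤ 0} := ⟨fun v => by omega⟩
    rw [Nat.card_of_isEmpty]
    have : 0 + d - 1 < d := by omega
    rw [Nat.choose_eq_zero_of_lt this]
  | succ n' =>
    rw [Nat.card_congr (Equiv.subtypeEquivRight (fun v => by omega :
      ∀ v : Fin d →₀ ℕ, fdeg v + 1 ≤ n' + 1 ↔ fdeg v ≤ n')), card_fdeg_le]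
    congr 1
    omega

lemma mv_eq_zero_of_box : ∀ (k : ℕ) (p : MvPolynomial (Fin k) ℝ) (T : Fin k → Set ℝ),
    (∀ i, (T i).Infinite) → (∀ y : Fin k → ℝ, (∀ i, y i ∈ T i) → eval y p = 0) → p = 0 := by
  intro k
  induction k with
  | zero =>
    intro p T hT h
    have h0 := h (fun i => i.elim0) (fun i => i.elim0)
    rw [eq_C_of_isEmpty p] at h0 ⊢
    rw [eval_C] at h0
    rw [h0, map_zero]
  | succ k ih =>
    intro p T hT h
    have key : ∀ s : Fin k → ℝ, (∀ i, s i ∈ T i.succ) →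
        Polynomial.map (eval s) (finSuccEquiv ℝ k p) = 0 := by
      intro s hs
      apply Polynomial.eq_zero_of_infinite_isRoot
      apply Set.Infinite.mono _ (hT 0)
      intro a ha
      simp only [Set.mem_setOf_eq, Polynomial.IsRoot]
      rw [← eval_eq_eval_mv_eval']
      apply h
      intro i
      refine Fin.cases ?_ ?_ i
      · exact ha
      · exact hs
    have hcoeff : ∀ j : ℕ, (finSuccEquiv ℝ k p).coeff j = 0 := by
      intro j
      apply ih _ (fun i => T i.succ) (fun i => hT i.succ)
      intro s hs
      have := key s hs
      have := congrArg (fun q => Polynomial.coeff q j) this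
      simpa [Polynomial.coeff_map] using this
    have : finSuccEquiv ℝ k p = 0 := Polynomial.ext fun j => by rw [hcoeff, Polynomial.coeff_zero]
    have := congrArg (finSuccEquiv ℝ k).symm this
    simpa using this

variable {k : ℕ}

/-- substitute `0` for variable `0`. -/
noncomputable def subZ (k : ℕ) : MvPolynomial (Fin (k+1)) ℝ →ₐ[ℝ] MvPolynomial (Fin (k+1)) ℝ :=
  aeval (fun i => if i = 0 then 0 else X i)

lemma eval_subZ (y : Fin (k+1) → ℝ) (q : MvPolynomial (Fin (k+1)) ℝ) :
    eval y (subZ k q) = eval (fun i => if i = 0 then 0 else y i) q := by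
  have : (eval y).comp (subZ k).toRingHom = eval (fun i => if i = 0 then 0 else y i) := by
    apply ringHom_ext
    · intro r
      simp [subZ]
    · intro i
      by_cases h : i = 0 <;> simp [subZ, h]
  exact congrFun (congrArg (fun f => f.toFun) this) q

lemma eval_subZ_indep (y y' : Fin (k+1) → ℝ) (h : ∀ i, i ≠ 0 → y i = y' i)
    (q : MvPolynomial (Fin (k+1)) ℝ) : eval y (subZ k q) = eval y' (subZ k q) := by
  rw [eval_subZ, eval_subZ]
  have : (fun i => if i = 0 then 0 else y i) = (fun i => if i = 0 then 0 else y' i) := by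
    funext i
    by_cases hi : i = 0 <;> simp [hi, h i]
  rw [this]

lemma monomial_univ_prod (m : Fin (k+1) →₀ ℕ) (c : ℝ) :
    monomial m c = C c * ∏ i, X i ^ m i := by
  rw [monomial_eq]
  congr 1
  exact Finsupp.prod_fintype _ _ (fun i => pow_zero _)

lemma subZ_monomial_of_ne (m : Fin (k+1) →₀ ℕ) (c : ℝ) (hm : m 0 = 0) :
    subZ k (monomial m c) = monomial m c := by
  rw [subZ, aeval_monomial]
  rw [monomial_univ_prod]
  have : (algebraMap ℝ (MvPolynomial (Fin (k+1)) ℝ)) c = C c := rfl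
  rw [this]
  congr 1
  have hp : (m.prod fun i e => (if i = 0 then 0 else X i : MvPolynomial (Fin (k+1)) ℝ) ^ e)
      = ∏ i, (if i = 0 then 0 else X i : MvPolynomial (Fin (k+1)) ℝ) ^ m i :=
    Finsupp.prod_fintype _ _ (fun i => pow_zero _)
  rw [hp, Fin.prod_univ_succ, Fin.prod_univ_succ]
  simp only [if_pos rfl, hm, pow_zero, one_mul]
  apply Finset.prod_congr rfl
  intro i _
  rw [if_neg (Fin.succ_ne_zero i)]

lemma subZ_decomp (q : MvPolynomial (Fin (k+1)) ℝ) (hq : degreeOf 0 q ≤ 1) :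
    q = subZ k q + X 0 * subZ k (pderiv 0 q) := by
  have key : ∀ m ∈ q.support, (monomial m (coeff m q) : MvPolynomial (Fin (k+1)) ℝ) =
      subZ k (monomial m (coeff m q)) + X 0 * subZ k (pderiv 0 (monomial m (coeff m q))) := by
    intro m hm
    have hm0 : m 0 ≤ 1 := degreeOf_le_iff.mp hq m hm
    set c := coeff m q with hc
    rcases Nat.le_one_iff_eq_zero_or_eq_one.mp hm0 with h0 | h1
    · rw [subZ_monomial_of_ne m c h0, pderiv_monomial]
      rw [h0, Nat.cast_zero, mul_zero, map_zero, map_zero, mul_zero, add_zero]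
    · have hN : subZ k (monomial m c) = 0 := by
        rw [subZ, aeval_monomial]
        have hp : (m.prod fun i e => (if i = 0 then 0 else X i : MvPolynomial (Fin (k+1)) ℝ) ^ e)
            = ∏ i, (if i = 0 then 0 else X i : MvPolynomial (Fin (k+1)) ℝ) ^ m i :=
          Finsupp.prod_fintype _ _ (fun i => pow_zero _)
        rw [hp, Fin.prod_univ_succ, if_pos rfl, h1, pow_one, zero_mul, mul_zero]
      rw [hN, zero_add, pderiv_monomial, h1, Nat.cast_one, mul_one]
      have hm'0 : ((m - Finsupp.single 0 1 : Fin (k+1) →₀ ℕ)) (0 : Fin (k+1)) = 0 := by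
        rw [Finsupp.tsub_apply, Finsupp.single_eq_same, h1]
      rw [subZ_monomial_of_ne _ c hm'0]
      have : (X 0 : MvPolynomial (Fin (k+1)) ℝ) = monomial (Finsupp.single 0 1) 1 := by
        rw [← X_pow_eq_monomial, pow_one]
      rw [this, monomial_mul, one_mul]
      have hsum : Finsupp.single (0 : Fin (k+1)) 1 + (m - Finsupp.single 0 1) = m := by
        ext i
        by_cases hi : i = 0
        · subst hi
          simp [Finsupp.tsub_apply, h1]
        · simp [Finsupp.single_apply, Ne.symm hi, Finsupp.tsub_apply, hi]
      rw [hsum]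
  conv_lhs => rw [q.as_sum]
  rw [Finset.sum_congr rfl key, Finset.sum_add_distrib, ← map_sum, ← Finset.mul_sum, ← map_sum,
    ← map_sum, ← q.as_sum]

lemma ker_lemma (d : ℕ) (hd : 2 ≤ d) (a b c : ℝ) (ha : a ≠ 0)
    (Sset : Set ℝ) (hSopen : IsOpen Sset) (hSne : Sset.Nonempty)
    (φ : ℝ → ℝ) (hφpos : ∀ t ∈ Sset, 0 < φ t)
    (hφ : ∀ t ∈ Sset, φ t ^ 2 = (t ^ 2 + b * t + c) / a)
    (q : MvPolynomial (Fin (d+1)) ℝ) (hq1 : degreeOf 0 q ≤ 1)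
    (hq0 : ∀ z : quadSurface d Sset φ,
      eval (Fin.snoc (z : EuclideanSpace ℝ (Fin d) × ℝ).1
        (z : EuclideanSpace ℝ (Fin d) × ℝ).2) q = 0) :
    q = 0 := by
  haveI : NeZero d := ⟨by omega⟩
  obtain ⟨t₀, ht₀⟩ := hSne
  set K : ℝ := φ t₀ ^ 2 / 2 with hK
  have hKpos : 0 < K := by
    have := hφpos t₀ ht₀
    positivity
  -- find a small interval around t₀ inside Sset where (t²+bt+c)/a > K
  have hcont : Continuous fun t : ℝ => (t ^ 2 + b * t + c) / a := by
    apply Continuous.div_const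
    continuity
  have hopen2 : IsOpen (Sset ∩ {t | K < (t ^ 2 + b * t + c) / a}) :=
    hSopen.inter (isOpen_lt continuous_const hcont)
  have ht₀mem : t₀ ∈ Sset ∩ {t | K < (t ^ 2 + b * t + c) / a} := by
    refine ⟨ht₀, ?_⟩
    have h1 := hφ t₀ ht₀
    have h2 := hφpos t₀ ht₀
    simp only [Set.mem_setOf_eq, ← h1, hK]
    nlinarith
  obtain ⟨ε, hε, hball⟩ := Metric.isOpen_iff.mp hopen2 t₀ ht₀mem
  rw [Real.ball_eq_Ioo] at hball
  set T : Set ℝ := Set.Ioo (t₀ - ε) (t₀ + ε) with hT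
  have hTsub : T ⊆ Sset ∩ {t | K < (t ^ 2 + b * t + c) / a} := hball
  have hTinf : T.Infinite := Set.Ioo_infinite (by linarith)
  set δ : ℝ := Real.sqrt (K / (d + 1)) with hδ
  have hδsq : δ ^ 2 = K / (d + 1) := Real.sq_sqrt (by positivity)
  have hδpos : 0 < δ := Real.sqrt_pos.mpr (by positivity)
  set lst : Fin (d + 1) := Fin.last d with hlst
  have hlst0 : lst ≠ 0 := by
    intro h
    have := congrArg Fin.val h
    simp only [hlst, Fin.val_last, Fin.val_zero] at this
    omega
  set Tset : Fin (d + 1) → Set ℝ :=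
    fun i => if i = 0 then Set.univ else if i = lst then T else Set.Ioo (-δ) δ with hTset
  have hTsetInf : ∀ i, (Tset i).Infinite := by
    intro i
    simp only [hTset]
    by_cases h0 : i = 0
    · simp [h0, Set.infinite_univ]
    · by_cases hl : i = lst
      · rw [hl, if_neg hlst0, if_pos rfl]
        exact hTinf
      · simp only [h0, hl, if_neg, if_false]
        exact Set.Ioo_infinite (by linarith)
  -- the key vanishing claim on the box
  have claim : ∀ y : Fin (d + 1) → ℝ, (∀ i, y i ∈ Tset i) →
      eval y (subZ d q) = 0 ∧ eval y (subZ d (pderiv 0 q)) = 0 := by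
    intro y hy
    set t : ℝ := y lst with htdef
    have htT : t ∈ T := by
      have := hy lst
      simpa [hTset, hlst0] using this
    have htS : t ∈ Sset := (hTsub htT).1
    have htK : K < (t ^ 2 + b * t + c) / a := (hTsub htT).2
    have hmid : ∀ j : Fin d, j ≠ 0 → (y (Fin.castSucc j)) ^ 2 < K / (d + 1) := by
      intro j hj
      have hcs0 : Fin.castSucc j ≠ 0 := by
        simpa [Fin.castSucc_eq_zero_iff] using hj
      have hcsl : Fin.castSucc j ≠ lst := (Fin.castSucc_lt_last j).ne
      have := hy (Fin.castSucc j)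
      simp only [hTset, hcs0, hcsl, if_neg, if_false, Set.mem_Ioo] at this
      rw [← hδsq]
      exact sq_lt_sq' this.1 this.2
    set sum2 : ℝ := ∑ j ∈ Finset.univ.erase (0 : Fin d), (y (Fin.castSucc j)) ^ 2 with hsum2
    have hsum2nonneg : 0 ≤ sum2 := Finset.sum_nonneg fun j _ => sq_nonneg _
    have hsum2lt : sum2 < K := by
      have hle : sum2 ≤ (Finset.univ.erase (0 : Fin d)).card • (K / (d + 1)) := by
        apply Finset.sum_le_card_nsmul
        intro j hj
        exact le_of_lt (hmid j (Finset.ne_of_mem_erase hj))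
      have hcard : ((Finset.univ.erase (0 : Fin d)).card : ℝ) ≤ d := by
        have : (Finset.univ.erase (0 : Fin d)).card ≤ d := by
          have := Finset.card_erase_le (a := (0 : Fin d)) (s := Finset.univ)
          simpa using this
        exact_mod_cast this
      rw [nsmul_eq_mul] at hle
      have hdlt : (d : ℝ) * (K / (d + 1)) < K := by
        rw [mul_div_assoc']
        rw [div_lt_iff₀ (by positivity)]
        nlinarith
      calc sum2 ≤ _ * (K / (d + 1)) := hle
        _ ≤ (d : ℝ) * (K / (d + 1)) := by
          apply mul_le_mul_of_nonneg_right hcard (by positivity)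
        _ < K := hdlt
    set s : ℝ := (t ^ 2 + b * t + c) / a - sum2 with hs
    have hspos : 0 < s := by simp only [hs]; linarith
    set u : ℝ := Real.sqrt s with hu
    have husq : u ^ 2 = s := Real.sq_sqrt hspos.le
    have hupos : 0 < u := Real.sqrt_pos.mpr hspos
    -- construct the two surface points
    have mk_point : ∀ v : ℝ, v ^ 2 = s →
        ∃ z : quadSurface d Sset φ,
          Fin.snoc (z : EuclideanSpace ℝ (Fin d) × ℝ).1
            (z : EuclideanSpace ℝ (Fin d) × ℝ).2
            = Function.update y 0 v := by
      intro v hv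
      set x : EuclideanSpace ℝ (Fin d) :=
        WithLp.toLp 2 (fun j => if j = 0 then v else y (Fin.castSucc j)) with hx
      have hnormsq : ∑ j, x j ^ 2 = φ t ^ 2 := by
        rw [← Finset.add_sum_erase _ _ (Finset.mem_univ (0 : Fin d))]
        have h1 : x 0 = v := by simp [hx]
        have h2 : ∑ j ∈ Finset.univ.erase (0 : Fin d), x j ^ 2 = sum2 := by
          apply Finset.sum_congr rfl
          intro j hj
          have : j ≠ 0 := Finset.ne_of_mem_erase hj
          simp [hx, this]
        rw [h1, h2, hv, hφ t htS, hs]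
        ring
      have hxnorm : ‖x‖ = φ t := by
        rw [EuclideanSpace.norm_eq]
        have : ∀ j, ‖x j‖ ^ 2 = x j ^ 2 := fun j => by
          rw [Real.norm_eq_abs, sq_abs]
        simp_rw [this, hnormsq]
        exact Real.sqrt_sq (hφpos t htS).le
      refine ⟨⟨(x, t), htS, hxnorm⟩, ?_⟩
      funext i
      refine Fin.lastCases ?_ ?_ i
      · simp only [Fin.snoc_last]
        rw [Function.update_of_ne hlst0]
      · intro j
        simp only [Fin.snoc_castSucc]
        by_cases hj : j = 0
        · subst hj
          rw [show Fin.castSucc (0 : Fin d) = (0 : Fin (d+1)) from rfl]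
          simp [hx, Function.update_self]
        · have hcs0 : Fin.castSucc j ≠ 0 := by
            intro hcc
            exact hj (Fin.castSucc_injective d (by rw [hcc]; rfl))
          rw [Function.update_of_ne hcs0]
          simp [hx, hj]
    obtain ⟨zp, hzp⟩ := mk_point u husq
    obtain ⟨zm, hzm⟩ := mk_point (-u) (by rw [neg_pow]; simp [husq])
    have hqp := hq0 zp
    have hqm := hq0 zm
    rw [hzp] at hqp
    rw [hzm] at hqm
    -- decompose q and evaluate
    have hdec := subZ_decomp q hq1
    have evalform : ∀ v : ℝ, eval (Function.update y 0 v) q =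
        eval y (subZ d q) + v * eval y (subZ d (pderiv 0 q)) := by
      intro v
      conv_lhs => rw [hdec]
      rw [map_add, map_mul, eval_X]
      rw [Function.update_self]
      congr 1
      · exact eval_subZ_indep _ _ (fun i hi => Function.update_of_ne hi _ _) q
      · congr 1
        exact eval_subZ_indep _ _ (fun i hi => Function.update_of_ne hi _ _) _
    rw [evalform u] at hqp
    rw [evalform (-u)] at hqm
    have hAB : eval y (subZ d q) = 0 := by linarith
    refine ⟨hAB, ?_⟩
    have hB0 : u * eval y (subZ d (pderiv 0 q)) = 0 := by linarith
    rcases mul_eq_zero.mp hB0 with h | h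
    · exact absurd h hupos.ne'
    · exact h
  have hA : subZ d q = 0 :=
    mv_eq_zero_of_box (d+1) _ Tset hTsetInf (fun y hy => (claim y hy).1)
  have hB : subZ d (pderiv 0 q) = 0 :=
    mv_eq_zero_of_box (d+1) _ Tset hTsetInf (fun y hy => (claim y hy).2)
  rw [subZ_decomp q hq1, hA, hB, mul_zero, add_zero]

lemma restrictLin_apply (d : ℕ) (A : Set (EuclideanSpace ℝ (Fin d) × ℝ))
    (p : MvPolynomial (Fin (d + 1)) ℝ) (z : A) :
    restrictLin d A p z = MvPolynomial.eval
      (Fin.snoc (z : EuclideanSpace ℝ (Fin d) × ℝ).1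
        (z : EuclideanSpace ℝ (Fin d) × ℝ).2) p := rfl

section Span

variable (d : ℕ) [NeZero d] (a b c : ℝ)

/-- The reduction polynomial for `X 0 ^ 2` on the surface. -/
def rhoPoly : MvPolynomial (Fin (d+1)) ℝ :=
  C a⁻¹ * X (Fin.last d) ^ 2 + C a⁻¹ * C b * X (Fin.last d) + C a⁻¹ * C c -
    ∑ i ∈ Finset.univ.erase (0 : Fin d), X (Fin.castSucc i) ^ 2

lemma eval_rhoPoly (hd : 2 ≤ d) (ha : a ≠ 0)
    (Sset : Set ℝ) (φ : ℝ → ℝ) (hφpos : ∀ t ∈ Sset, 0 < φ t)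
    (hφ : ∀ t ∈ Sset, φ t ^ 2 = (t ^ 2 + b * t + c) / a)
    (z : quadSurface d Sset φ) :
    eval (Fin.snoc (z : EuclideanSpace ℝ (Fin d) × ℝ).1
        (z : EuclideanSpace ℝ (Fin d) × ℝ).2) (rhoPoly d a b c) =
    eval (Fin.snoc (z : EuclideanSpace ℝ (Fin d) × ℝ).1
        (z : EuclideanSpace ℝ (Fin d) × ℝ).2) ((X 0 : MvPolynomial (Fin (d+1)) ℝ) ^ 2) := by
  haveI : NeZero d := ⟨by omega⟩
  obtain ⟨⟨x, t⟩, htS, hxn⟩ := z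
  have hsum : ∑ j, x j ^ 2 = (t ^ 2 + b * t + c) / a := by
    have h1 : φ t = Real.sqrt (∑ j, x j ^ 2) := by
      rw [← hxn, EuclideanSpace.norm_eq]
      congr 1
      apply Finset.sum_congr rfl
      intro j _
      rw [Real.norm_eq_abs, sq_abs]
    have h2 := hφ t htS
    rw [h1, Real.sq_sqrt (Finset.sum_nonneg fun j _ => sq_nonneg _)] at h2
    exact h2
  have hsplit : ∑ j, x j ^ 2 = x 0 ^ 2 + ∑ j ∈ Finset.univ.erase (0 : Fin d), x j ^ 2 :=
    (Finset.add_sum_erase _ _ (Finset.mem_univ (0 : Fin d))).symm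
  simp only [rhoPoly, map_sub, map_add, map_mul, map_pow, eval_C, eval_X, map_sum]
  rw [show (0 : Fin (d+1)) = Fin.castSucc 0 from rfl]
  simp only [Fin.snoc_last, Fin.snoc_castSucc]
  rw [hsplit, div_eq_inv_mul] at hsum
  linarith

lemma fdeg_add {k : ℕ} (σ τ : Fin k →₀ ℕ) : fdeg (σ + τ) = fdeg σ + fdeg τ := by
  rw [fdeg_eq_sum, fdeg_eq_sum, fdeg_eq_sum, ← Finset.sum_add_distrib]
  apply Finset.sum_congr rfl
  intro i _
  rw [Finsupp.add_apply]

lemma fdeg_single {k : ℕ} (i : Fin k) (e : ℕ) : fdeg (Finsupp.single i e) = e :=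
  Finsupp.sum_single_index rfl

lemma span_mem (hd : 2 ≤ d) (ha : a ≠ 0)
    (Sset : Set ℝ) (φ : ℝ → ℝ) (hφpos : ∀ t ∈ Sset, 0 < φ t)
    (hφ : ∀ t ∈ Sset, φ t ^ 2 = (t ^ 2 + b * t + c) / a) (n : ℕ) :
    ∀ (K : ℕ) (m : Fin (d+1) →₀ ℕ), m 0 ≤ K → fdeg m ≤ n →
      restrictLin d (quadSurface d Sset φ) (monomial m 1) ∈
        Submodule.span ℝ (Set.range fun mm : {m : Fin (d+1) →₀ ℕ // fdeg m ≤ n ∧ m 0 ≤ 1} =>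
          restrictLin d (quadSurface d Sset φ) (monomial mm.1 1)) := by
  set L := restrictLin d (quadSurface d Sset φ) with hL
  set W := Submodule.span ℝ (Set.range fun mm : {m : Fin (d+1) →₀ ℕ // fdeg m ≤ n ∧ m 0 ≤ 1} =>
          L (monomial mm.1 1)) with hW
  have base : ∀ m : Fin (d+1) →₀ ℕ, m 0 ≤ 1 → fdeg m ≤ n → L (monomial m 1) ∈ W := by
    intro m h1 h2
    exact Submodule.subset_span (Set.mem_range_self (⟨m, h2, h1⟩ :
      {m : Fin (d+1) →₀ ℕ // fdeg m ≤ n ∧ m 0 ≤ 1}))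
  intro K
  induction K with
  | zero => exact fun m h1 h2 => base m (by omega) h2
  | succ K ih =>
    intro m h1 h2
    by_cases hK : m 0 ≤ K
    · exact ih m hK h2
    · have hm0 : m 0 = K + 1 := by omega
      by_cases hK1 : K + 1 ≤ 1
      · exact base m (by omega) h2
      -- now m 0 ≥ 2
      · have hm02 : 2 ≤ m 0 := by omega
        set m' : Fin (d+1) →₀ ℕ := m - Finsupp.single 0 2 with hm'
        have hmdec : Finsupp.single (0 : Fin (d+1)) 2 + m' = m := by
          ext i
          by_cases hi : i = 0
          · subst hi
            simp only [Finsupp.add_apply, Finsupp.tsub_apply, hm', Finsupp.single_eq_same]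
            omega
          · simp [hm', Finsupp.single_apply, Ne.symm hi, hi, Finsupp.add_apply,
              Finsupp.tsub_apply]
        have hm'0 : m' 0 = m 0 - 2 := by
          simp [hm', Finsupp.tsub_apply]
        have hfdeg : fdeg m = 2 + fdeg m' := by
          rw [← hmdec, fdeg_add, fdeg_single]
        set M : MvPolynomial (Fin (d+1)) ℝ := monomial m' 1 with hM
        -- key reduction
        have hred : L (monomial m 1) = L (rhoPoly d a b c * M) := by
          have hX : (monomial m (1:ℝ)) = (X 0 : MvPolynomial (Fin (d+1)) ℝ) ^ 2 * M := by
            rw [hM, X_pow_eq_monomial, monomial_mul, one_mul, hmdec]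
          rw [hX]
          funext z
          rw [restrictLin_apply, restrictLin_apply, map_mul, map_mul]
          rw [← eval_rhoPoly d a b c hd ha Sset φ hφpos hφ z]
        rw [hred]
        -- expand rhoPoly * M
        have hexp : rhoPoly d a b c * M =
            a⁻¹ • (X (Fin.last d) ^ 2 * M) + (a⁻¹ * b) • (X (Fin.last d) * M) +
            (a⁻¹ * c) • M -
            ∑ i ∈ Finset.univ.erase (0 : Fin d), X (Fin.castSucc i) ^ 2 * M := by
          rw [rhoPoly, ← Finset.sum_mul]
          simp only [smul_eq_C_mul, map_mul]
          ring
        rw [hexp, map_sub, map_add, map_add, _root_.map_smul, _root_.map_smul, _root_.map_smul, map_sum]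
        have hterm : ∀ (i : Fin (d+1)) (e : ℕ), i ≠ 0 → 0 < e → e ≤ 2 →
            L (X i ^ e * M) ∈ W := by
          intro i e hi he1 he2
          have : (X i : MvPolynomial (Fin (d+1)) ℝ) ^ e * M =
              monomial (Finsupp.single i e + m') 1 := by
            rw [hM, X_pow_eq_monomial, monomial_mul, one_mul]
          rw [this]
          apply ih
          · rw [Finsupp.add_apply, Finsupp.single_apply, if_neg hi, zero_add, hm'0]
            omega
          · rw [fdeg_add, fdeg_single]
            omega
        haveI : NeZero d := ⟨by omega⟩
        have hlast0 : (Fin.last d) ≠ (0 : Fin (d+1)) := by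
          intro h
          have := congrArg Fin.val h
          simp only [Fin.val_last, Fin.val_zero] at this
          omega
        apply Submodule.sub_mem
        · apply Submodule.add_mem
          apply Submodule.add_mem
          · exact Submodule.smul_mem _ _ (hterm _ 2 hlast0 (by omega) (by omega))
          · exact Submodule.smul_mem _ _ (by
              have := hterm (Fin.last d) 1 hlast0 (by omega) (by omega)
              rwa [pow_one] at this)
          · apply Submodule.smul_mem
            apply ih m' (by omega) (by omega)
        · apply Submodule.sum_mem
          intro i hi
          have hcs0 : Fin.castSucc i ≠ 0 := by
            simpa [Fin.castSucc_eq_zero_iff] using Finset.ne_of_mem_erase hi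
          exact hterm _ 2 hcs0 (by omega) (by omega)

end Span

def M01 (k : ℕ) : Submodule ℝ (MvPolynomial (Fin (k+1)) ℝ) where
  carrier := {p | degreeOf 0 p ≤ 1}
  add_mem' h1 h2 := le_trans (degreeOf_add_le _ _ _) (max_le h1 h2)
  zero_mem' := by simp [degreeOf_zero]
  smul_mem' r p hp := degreeOf_le_iff.mpr fun m hm => degreeOf_le_iff.mp hp m (support_smul hm)



/-- For `d ≥ 2`, a nonempty open interval `S ⊆ ℝ` and `φ > 0` on `S` with
`φ(t)² = (t² + b t + c)/a`, `a ≠ 0`, the space `Π_n(∂V^{d+1})` of restrictions to the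
quadratic surface of revolution of polynomials of total degree at most `n` has dimension
`C(n+d, d) + C(n+d−1, d)`. -/
theorem finrank_polynomial_restrictions_quadSurface
    (d : ℕ) (hd : 2 ≤ d) (n : ℕ) (a b c : ℝ) (ha : a ≠ 0)
    (Sset : Set ℝ) (hSopen : IsOpen Sset) (hSne : Sset.Nonempty)
    (hSconn : Sset.OrdConnected)
    (φ : ℝ → ℝ) (hφpos : ∀ t ∈ Sset, 0 < φ t)
    (hφ : ∀ t ∈ Sset, φ t ^ 2 = (t ^ 2 + b * t + c) / a) :
    Module.finrank ℝ
      ↥(Submodule.map (restrictLin d (quadSurface d Sset φ))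
          (MvPolynomial.restrictTotalDegree (Fin (d + 1)) ℝ n)) =
      Nat.choose (n + d) d + Nat.choose (n + d - 1) d := by
  haveI : NeZero d := ⟨by omega⟩
  set L := restrictLin d (quadSurface d Sset φ) with hLdef
  set f : {m : Fin (d+1) →₀ ℕ // fdeg m ≤ n ∧ m 0 ≤ 1} → (quadSurface d Sset φ → ℝ) :=
    fun mm => L (monomial mm.1 1) with hfdef
  have hspan : Submodule.map L (restrictTotalDegree (Fin (d + 1)) ℝ n) =
      Submodule.span ℝ (Set.range f) := by
    apply le_antisymm
    · rintro _ ⟨p, hp, rfl⟩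
      rw [SetLike.mem_coe, mem_restrictTotalDegree] at hp
      rw [p.as_sum, map_sum]
      apply Submodule.sum_mem
      intro v hv
      have h1 : monomial v (coeff v p) = (coeff v p) • monomial v (1:ℝ) := by
        rw [smul_monomial, smul_eq_mul, mul_one]
      rw [h1, _root_.map_smul]
      apply Submodule.smul_mem
      exact span_mem d a b c hd ha Sset φ hφpos hφ n (v 0) v le_rfl
        (le_trans (le_totalDegree hv) hp)
    · rw [Submodule.span_le]
      rintro _ ⟨mm, rfl⟩
      exact ⟨monomial mm.1 1, by
        rw [SetLike.mem_coe, mem_restrictTotalDegree,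
          totalDegree_monomial _ (one_ne_zero (α := ℝ))]
        exact mm.2.1, rfl⟩
  have hv : LinearIndependent ℝ
      (fun mm : {m : Fin (d+1) →₀ ℕ // fdeg m ≤ n ∧ m 0 ≤ 1} => monomial mm.1 (1:ℝ)) := by
    have := (basisMonomials (Fin (d+1)) ℝ).linearIndependent.comp
      (Subtype.val : {m : Fin (d+1) →₀ ℕ // fdeg m ≤ n ∧ m 0 ≤ 1} → (Fin (d+1) →₀ ℕ))
      Subtype.val_injective
    rwa [coe_basisMonomials] at this
  have hdisj : Disjoint (Submodule.span ℝ (Set.range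
      (fun mm : {m : Fin (d+1) →₀ ℕ // fdeg m ≤ n ∧ m 0 ≤ 1} => monomial mm.1 (1:ℝ))))
      (LinearMap.ker L) := by
    rw [Submodule.disjoint_def]
    intro x hx hker
    have hdeg : degreeOf 0 x ≤ 1 := by
      have hsub : Submodule.span ℝ (Set.range
          (fun mm : {m : Fin (d+1) →₀ ℕ // fdeg m ≤ n ∧ m 0 ≤ 1} => monomial mm.1 (1:ℝ)))
          ≤ M01 d := by
        rw [Submodule.span_le]
        rintro _ ⟨mm, rfl⟩
        show degreeOf 0 (monomial mm.1 (1:ℝ)) ≤ 1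
        apply degreeOf_le_iff.mpr
        intro m hm
        rw [support_monomial] at hm
        simp only [one_ne_zero, if_false, Finset.mem_singleton] at hm
        subst hm
        exact mm.2.2
      exact hsub hx
    have hLx : L x = 0 := LinearMap.mem_ker.mp hker
    apply ker_lemma d hd a b c ha Sset hSopen hSne φ hφpos hφ x hdeg
    intro z
    exact congrFun hLx z
  have hli : LinearIndependent ℝ f := hv.map hdisj
  haveI : Finite {m : Fin (d+1) →₀ ℕ // fdeg m ≤ n ∧ m 0 ≤ 1} :=
    Finite.of_equiv _ (eB d n).symm
  haveI : Fintype {m : Fin (d+1) →₀ ℕ // fdeg m ≤ n ∧ m 0 ≤ 1} := Fintype.ofFinite _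
  rw [hspan, finrank_span_eq_card hli, ← Nat.card_eq_fintype_card, card_B d n (by omega)]
end
end

section
/- Let d ≥ 2, let S ⊆ ℝ be an open set, and let φ : S → [0,∞) be either (i) a linear polynomial that is nonnegative on S, or (ii) the square root of a polynomial of degree at most 2 that is nonnegative on S. Let w ≥ 0 be a weight on S with all moments ∫_S |t|^k φ(t)^{d−1} w(t) dt finite and ∫_S φ(t)^{d−1} w(t) dt > 0, and suppose that polynomials of one variable of each degree n that are orthogonal with respect to the weight φ(t)^{2m+d−1} w(t) on S exist for every m; denote by q_n^{(m)} such an orthogonal polynomial of degree n. Let {Y_ℓ^m : 1 ≤ ℓ ≤ dim H_m^d} be a basis of the space H_m^d of spherical harmonics of degree m in d variables (harmonic polynomials on ℝ^d homogeneous of degree m) that is orthonormal with respect to the normalized surface measure dσ/ω_d on the unit sphere S^{d−1}, where ω_d is the surface area of S^{d−1}. Define S_{m,ℓ}^n(x,t) := q_{n−m}^{(m)}(t) · φ(t)^m · Y_ℓ^m(x/φ(t)) for 0 ≤ m ≤ n and 1 ≤ ℓ ≤ dim H_m^d. Then: (1) S_{m,ℓ}^n(x,t) = q_{n−m}^{(m)}(t)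 Y_ℓ^m(x), so S_{m,ℓ}^n is a polynomial of degree at most n in (x,t); and (2) ⟨S_{m,ℓ}^n, S_{m',ℓ'}^{n'}⟩_w = h_m^n δ_{n,n'} δ_{m,m'} δ_{ℓ,ℓ'}, where ⟨f,g⟩_w := c_w ∫_S φ(t)^{d−1} (∫_{S^{d−1}} f(φ(t)ξ, t) g(φ(t)ξ, t) dσ(ξ)) w(t) dt with c_w normalized so that ⟨1,1⟩_w = 1, and h_m^n = c_w ω_d ∫_S [q_{n−m}^{(m)}(t)]² φ(t)^{2m+d−1} w(t) dt > 0. -/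
/-!
Since `Y` is homogeneous of degree `m`, `Y(φ(t) ξ) = φ(t)^m Y(ξ)`. This gives part (1), and in the
inner product it splits off the spherical factor `∫ Y Y' dσ = ω_d δ`, leaving `q q'` integrated
against `φ^{m+m'+d-1} w`; for `m = m'` this is the weight `φ^{2m+d-1} w` of `q^{(m)}`.
As `φ²` is a polynomial on `S`, a polynomial times this weight is a polynomial times `φ^{d-1} w`,
so the finite moments make all integrals finite, and orthogonality to the monomials of lower
degree becomes orthogonality to all polynomials of lower degree. `h_m^n > 0` because `q` has
finitely many zeros and, for `d ≥ 2`, `φ` cannot vanish where `φ^{d-1} w` does not.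
-/

open MeasureTheory MvPolynomial

noncomputable section

/-- The surface measure `dσ` on the unit sphere `S^{d−1} ⊆ ℝ^d`. -/
def sphMeas (d : ℕ) : Measure (Metric.sphere (0 : EuclideanSpace ℝ (Fin d)) 1) :=
  (volume : Measure (EuclideanSpace ℝ (Fin d))).toSphere

/-- The surface area `ω_d` of the unit sphere `S^{d−1} ⊆ ℝ^d`. -/
def sphArea (d : ℕ) : ℝ := ((sphMeas d) Set.univ).toReal

/-- The Laplace operator on polynomials in `d` variables. -/
def laplacianLM (d : ℕ) : MvPolynomial (Fin d) ℝ →ₗ[ℝ] MvPolynomial (Fin d) ℝ :=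
  ∑ i : Fin d, ((MvPolynomial.pderiv i).toLinearMap ∘ₗ (MvPolynomial.pderiv i).toLinearMap)

/-- `dim H_m^d`, the dimension of the space of spherical harmonics of degree `m` in `d`
variables (homogeneous harmonic polynomials of degree `m`). -/
def harmDim (d m : ℕ) : ℕ :=
  Module.finrank ℝ
    ↥(MvPolynomial.homogeneousSubmodule (Fin d) ℝ m ⊓ LinearMap.ker (laplacianLM d))

namespace MvPolynomial

theorem IsHomogeneous.eval_smul {σ R : Type*} [CommSemiring R] {p : MvPolynomial σ R} {m : ℕ}
    (hp : p.IsHomogeneous m) (c : R) (x : σ → R) :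
    eval (c • x) p = c ^ m * eval x p := by
  simp only [eval_eq, Finset.mul_sum, Pi.smul_apply, smul_eq_mul, mul_pow,
    Finset.prod_mul_distrib, Finset.prod_pow_eq_pow_sum]
  refine Finset.sum_congr rfl fun s hs => ?_
  have hdeg : ∑ i ∈ s.support, s i = m := by
    rw [← hp (mem_support_iff.mp hs), Finsupp.weight_apply, Finsupp.sum]
    simp
  rw [hdeg]
  ring

theorem IsHomogeneous.pow_mul_eval_div {σ K : Type*} [Field K] {p : MvPolynomial σ K} {m : ℕ}
    (hp : p.IsHomogeneous m) {c : K} (hc : c ≠ 0) (x : σ → K) :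
    c ^ m * eval (fun i => x i / c) p = eval x p := by
  rw [← hp.eval_smul, show c • (fun i => x i / c) = x from
    _root_.funext fun i => mul_div_cancel₀ (x i) hc]

theorem totalDegree_toMvPolynomial_le {σ R : Type*} [CommSemiring R] (i : σ) (r : Polynomial R) :
    (r.toMvPolynomial i).totalDegree ≤ r.natDegree := by
  conv_lhs => rw [r.as_sum_range_C_mul_X_pow]
  simp only [map_sum, map_mul, Polynomial.toMvPolynomial_C, map_pow, Polynomial.toMvPolynomial_X]
  refine (totalDegree_finsetSum _ _).trans (Finset.sup_le fun k hk => ?_)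
  rw [C_mul_X_pow_eq_monomial]
  exact (totalDegree_monomial_le _ _).trans (by simpa [Nat.lt_succ_iff] using hk)

theorem exists_totalDegree_le_eval_snoc_eq_eval_mul_eval {R : Type*} [CommSemiring R]
    {d m j : ℕ} {Y : MvPolynomial (Fin d) R} (hY : Y.totalDegree ≤ m) {r : Polynomial R}
    (hr : r.natDegree ≤ j) :
    ∃ P : MvPolynomial (Fin (d + 1)) R, P.totalDegree ≤ m + j ∧
      ∀ (x : Fin d → R) (t : R), eval (Fin.snoc x t) P = r.eval t * eval x Y := by
  refine ⟨rename Fin.castSucc Y * r.toMvPolynomial (Fin.last d), ?_, fun x t => ?_⟩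
  · exact (totalDegree_mul _ _).trans <| add_le_add
      ((totalDegree_rename_le _ _).trans hY) ((totalDegree_toMvPolynomial_le _ _).trans hr)
  · rw [map_mul, eval_rename, eval_toMvPolynomial, Fin.snoc_comp_castSucc, Fin.snoc_last,
      mul_comm]

end MvPolynomial

theorem Polynomial.ae_eval_ne_zero {μ : Measure ℝ} [NullSingletonClass μ] {p : Polynomial ℝ}
    (hp : p ≠ 0) :
    ∀ᵐ t ∂μ, p.eval t ≠ 0 :=
  ae_iff.2 <| by simpa using (Polynomial.finite_setOfPred_isRoot hp).measure_zero μ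

theorem Polynomial.integrable_eval_mul_of_moments {μ : Measure ℝ} {g : ℝ → ℝ}
    (hg : ∀ k : ℕ, Integrable (fun t => |t| ^ k * g t) μ) (r : Polynomial ℝ) :
    Integrable (fun t => r.eval t * g t) μ := by
  have hmeas : AEStronglyMeasurable (fun t => r.eval t * g t) μ :=
    r.continuous.aestronglyMeasurable.mul (by simpa using (hg 0).aestronglyMeasurable)
  refine (integrable_finsetSum (Finset.range (r.natDegree + 1))
    fun k _ => ((hg k).norm.const_mul |r.coeff k|)).mono' hmeas (.of_forall fun t => ?_)
  calc ‖r.eval t * g t‖ = |r.eval t| * |g t| := by rw [Real.norm_eq_abs, abs_mul]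
    _ ≤ (∑ k ∈ Finset.range (r.natDegree + 1), |r.coeff k| * |t| ^ k) * |g t| := by
        gcongr
        rw [r.eval_eq_sum_range]
        exact (Finset.abs_sum_le_sum_abs _ _).trans_eq (by simp [abs_mul])
    _ = _ := by simp [Finset.sum_mul, mul_assoc]

section Orthogonality

variable {μ : Measure ℝ} {v : ℝ → ℝ}

theorem integral_eval_mul_eval_eq_zero_of_natDegree_lt {p r : Polynomial ℝ}
    (hint : ∀ k < p.natDegree, Integrable (fun t => p.eval t * (t ^ k * v t)) μ)
    (horth : ∀ k < p.natDegree, ∫ t, p.eval t * (t ^ k * v t) ∂μ = 0)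
    (hr : r.natDegree < p.natDegree) :
    ∫ t, p.eval t * (r.eval t * v t) ∂μ = 0 := by
  have hlt : ∀ k ∈ Finset.range (r.natDegree + 1), k < p.natDegree := fun k hk =>
    (Finset.mem_range_succ_iff.mp hk).trans_lt hr
  calc ∫ t, p.eval t * (r.eval t * v t) ∂μ
      = ∫ t, ∑ k ∈ Finset.range (r.natDegree + 1),
          r.coeff k * (p.eval t * (t ^ k * v t)) ∂μ := by
        congr 1 with t
        rw [r.eval_eq_sum_range, Finset.sum_mul, Finset.mul_sum]
        exact Finset.sum_congr rfl fun k _ => by ring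
    _ = 0 := by
        rw [integral_finsetSum _ fun k hk => (hint k (hlt k hk)).const_mul _]
        exact Finset.sum_eq_zero fun k hk => by
          rw [integral_const_mul, horth k (hlt k hk), mul_zero]

theorem integral_eval_mul_eval_eq_zero_of_ne {q : ℕ → Polynomial ℝ}
    (hdeg : ∀ j, (q j).natDegree = j)
    (hint : ∀ j k, k < j → Integrable (fun t => (q j).eval t * (t ^ k * v t)) μ)
    (horth : ∀ j k, k < j → ∫ t, (q j).eval t * (t ^ k * v t) ∂μ = 0) {i j : ℕ}
    (hij : i ≠ j) :
    ∫ t, (q i).eval t * ((q j).eval t * v t) ∂μ = 0 := by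
  have of_lt : ∀ {i j}, j < i → ∫ t, (q i).eval t * ((q j).eval t * v t) ∂μ = 0 := fun {i j} hlt =>
    integral_eval_mul_eval_eq_zero_of_natDegree_lt (by rw [hdeg]; exact hint i)
      (by rw [hdeg]; exact horth i) (by rwa [hdeg, hdeg])
  rcases hij.lt_or_gt with hlt | hlt
  · simpa only [mul_left_comm ((q i).eval _)] using of_lt hlt
  · exact of_lt hlt

end Orthogonality

theorem exists_eval_eq_sq_of_linear_or_sqrt_quadratic {s : Set ℝ} {φ : ℝ → ℝ}
    (hφ : (∃ c1 c0 : ℝ, ∀ t ∈ s, φ t = c1 * t + c0) ∨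
      (∃ c2 c1 c0 : ℝ, (∀ t ∈ s, 0 ≤ c2 * t ^ 2 + c1 * t + c0) ∧
        ∀ t ∈ s, φ t = Real.sqrt (c2 * t ^ 2 + c1 * t + c0))) :
    ∃ p : Polynomial ℝ, ∀ t ∈ s, φ t ^ 2 = p.eval t := by
  rcases hφ with ⟨c1, c0, h⟩ | ⟨c2, c1, c0, hnn, h⟩
  · exact ⟨(.C c1 * .X + .C c0) ^ 2, fun t ht => by simp [h t ht]⟩
  · exact ⟨.C c2 * .X ^ 2 + .C c1 * .X + .C c0, fun t ht => by
      simp [h t ht, Real.sq_sqrt (hnn t ht)]⟩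

section Weight

variable {s : Set ℝ} {φ w : ℝ → ℝ} {e : ℕ}

theorem integrableOn_eval_mul_pow_mul (hs : MeasurableSet s) {p : Polynomial ℝ}
    (hp : ∀ t ∈ s, φ t ^ 2 = p.eval t)
    (hmom : ∀ k : ℕ, IntegrableOn (fun t => |t| ^ k * (φ t ^ e * w t)) s) (M : ℕ)
    (r : Polynomial ℝ) :
    IntegrableOn (fun t => r.eval t * (φ t ^ (2 * M + e) * w t)) s := by
  refine IntegrableOn.congr_fun ((r * p ^ M).integrable_eval_mul_of_moments hmom)
    (fun t ht => ?_) hs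
  simp only [Polynomial.eval_mul, Polynomial.eval_pow, ← hp t ht, pow_add, pow_mul]
  ring

theorem setIntegral_eval_sq_mul_pow_mul_pos (hs : MeasurableSet s) (he : e ≠ 0)
    (hφ0 : ∀ t ∈ s, 0 ≤ φ t) (hw0 : ∀ t ∈ s, 0 ≤ w t) (hmass : 0 < ∫ t in s, φ t ^ e * w t)
    {r : Polynomial ℝ} (hr : r ≠ 0) (M : ℕ)
    (hint : IntegrableOn (fun t => r.eval t ^ 2 * (φ t ^ (2 * M + e) * w t)) s) :
    0 < ∫ t in s, r.eval t ^ 2 * (φ t ^ (2 * M + e) * w t) := by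
  have hnonneg : ∀ {f : ℝ → ℝ}, (∀ t ∈ s, 0 ≤ f t) → 0 ≤ᵐ[volume.restrict s] f := fun hf =>
    (ae_restrict_iff' hs).2 (.of_forall hf)
  have hbase := (setIntegral_pos_iff_support_of_nonneg_ae
    (hnonneg fun t ht => by have := hφ0 t ht; have := hw0 t ht; positivity)
    (Integrable.of_integral_ne_zero hmass.ne')).1 hmass
  rw [setIntegral_pos_iff_support_of_nonneg_ae
    (hnonneg fun t ht => by have := hφ0 t ht; have := hw0 t ht; positivity) hint]
  refine hbase.trans_le (measure_mono_ae ?_)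
  filter_upwards [Polynomial.ae_eval_ne_zero hr] with t hrt ⟨hbase_t, hts⟩
  have hφt : φ t ≠ 0 := fun h0 => hbase_t (by simp [h0, zero_pow he])
  have hwt : w t ≠ 0 := fun h0 => hbase_t (by simp [h0])
  exact ⟨by simp [hrt, hφt, hwt], hts⟩

end Weight

theorem integral_mul_integral_eval_smul_mul_eval_smul {T X : Type*} [MeasurableSpace T]
    [MeasurableSpace X] {d m m' e : ℕ} {Y Y' : MvPolynomial (Fin d) ℝ}
    (hY : Y.IsHomogeneous m) (hY' : Y'.IsHomogeneous m') (μ : Measure T) (ν : Measure X)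
    (ι : X → EuclideanSpace ℝ (Fin d)) (φ w f f' : T → ℝ) :
    ∫ t, φ t ^ e * (∫ ξ, (f t * MvPolynomial.eval (φ t • ι ξ) Y) *
      (f' t * MvPolynomial.eval (φ t • ι ξ) Y') ∂ν) * w t ∂μ =
    (∫ ξ, MvPolynomial.eval (ι ξ) Y * MvPolynomial.eval (ι ξ) Y' ∂ν) *
      ∫ t, f t * (f' t * (φ t ^ (m + m' + e) * w t)) ∂μ := by
  rw [← integral_const_mul]
  congr 1 with t
  have hscale : ∀ ξ, (f t * MvPolynomial.eval (φ t • ι ξ) Y) *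
      (f' t * MvPolynomial.eval (φ t • ι ξ) Y') =
      f t * f' t * φ t ^ (m + m') * (MvPolynomial.eval (ι ξ) Y * MvPolynomial.eval (ι ξ) Y') :=
    fun ξ => by simp only [WithLp.ofLp_smul, hY.eval_smul, hY'.eval_smul]; ring
  simp only [hscale, integral_const_mul]
  ring

theorem surface_orthogonal_basis_general
    (d : ℕ) (hd : 2 ≤ d)
    (Sset : Set ℝ) (hSopen : IsOpen Sset)
    (φ : ℝ → ℝ) (hφ0 : ∀ t ∈ Sset, 0 ≤ φ t)
    (hφ : (∃ c1 c0 : ℝ, ∀ t ∈ Sset, φ t = c1 * t + c0) ∨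
      (∃ c2 c1 c0 : ℝ, (∀ t ∈ Sset, 0 ≤ c2 * t ^ 2 + c1 * t + c0) ∧
        ∀ t ∈ Sset, φ t = Real.sqrt (c2 * t ^ 2 + c1 * t + c0)))
    (w : ℝ → ℝ) (hw0 : ∀ t ∈ Sset, 0 ≤ w t)
    (hmom : ∀ k : ℕ, IntegrableOn (fun t => |t| ^ k * (φ t) ^ (d - 1) * w t) Sset)
    (hmass : 0 < ∫ t in Sset, (φ t) ^ (d - 1) * w t)
    -- the orthogonal polynomials `q_j^{(m)}` with respect to `φ(t)^{2m+d−1} w(t)` on `S`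
    (q : ℕ → ℕ → Polynomial ℝ)
    (hqdeg : ∀ m j, (q m j).degree = j)
    (hqorth : ∀ m j k, k < j →
      ∫ t in Sset, (q m j).eval t * t ^ k * (φ t) ^ (2 * m + d - 1) * w t = 0)
    -- an orthonormal basis of spherical harmonics `Y_ℓ^m`, `1 ≤ ℓ ≤ dim H_m^d`
    (Y : ℕ → ℕ → MvPolynomial (Fin d) ℝ)
    (hYhom : ∀ m ℓ, ℓ ∈ Finset.Icc 1 (harmDim d m) → (Y m ℓ).IsHomogeneous m)
    (hYorth : ∀ m ℓ m' ℓ', ℓ ∈ Finset.Icc 1 (harmDim d m) →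
      ℓ' ∈ Finset.Icc 1 (harmDim d m') →
      (sphArea d)⁻¹ *
        ∫ ξ : Metric.sphere (0 : EuclideanSpace ℝ (Fin d)) 1,
          MvPolynomial.eval (ξ : EuclideanSpace ℝ (Fin d)) (Y m ℓ) *
          MvPolynomial.eval (ξ : EuclideanSpace ℝ (Fin d)) (Y m' ℓ') ∂(sphMeas d) =
        if m = m' ∧ ℓ = ℓ' then 1 else 0)
    -- the normalization constant `c_w`, with `⟨1,1⟩_w = 1`
    (cw : ℝ) (hcw : cw * (sphArea d * ∫ t in Sset, (φ t) ^ (d - 1) * w t) = 1) :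
    ∀ n m ℓ : ℕ, m ≤ n → ℓ ∈ Finset.Icc 1 (harmDim d m) →
      -- (1) `φ(t)^m Y_ℓ^m(x/φ(t)) = Y_ℓ^m(x)`, so `S_{m,ℓ}^n` is a polynomial of degree ≤ n
      (∀ (x : Fin d → ℝ) (t : ℝ), φ t ≠ 0 →
        (φ t) ^ m * MvPolynomial.eval (fun i => x i / φ t) (Y m ℓ) =
          MvPolynomial.eval x (Y m ℓ)) ∧
      (∃ P : MvPolynomial (Fin (d + 1)) ℝ, P.totalDegree ≤ n ∧
        ∀ (x : Fin d → ℝ) (t : ℝ), MvPolynomial.eval (Fin.snoc x t) P =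
          (q m (n - m)).eval t * MvPolynomial.eval x (Y m ℓ)) ∧
      -- (2) orthogonality `⟨S_{m,ℓ}^n, S_{m',ℓ'}^{n'}⟩_w = h_m^n δ δ δ` with `h_m^n > 0`
      (0 < cw * sphArea d *
          ∫ t in Sset, ((q m (n - m)).eval t) ^ 2 * (φ t) ^ (2 * m + d - 1) * w t) ∧
      (∀ n' m' ℓ' : ℕ, m' ≤ n' → ℓ' ∈ Finset.Icc 1 (harmDim d m') →
        cw * ∫ t in Sset, (φ t) ^ (d - 1) *
          (∫ ξ : Metric.sphere (0 : EuclideanSpace ℝ (Fin d)) 1,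
            ((q m (n - m)).eval t *
              MvPolynomial.eval (φ t • (ξ : EuclideanSpace ℝ (Fin d))) (Y m ℓ)) *
            ((q m' (n' - m')).eval t *
              MvPolynomial.eval (φ t • (ξ : EuclideanSpace ℝ (Fin d))) (Y m' ℓ'))
            ∂(sphMeas d)) * w t =
        if n = n' ∧ m = m' ∧ ℓ = ℓ' then
          cw * sphArea d *
            ∫ t in Sset, ((q m (n - m)).eval t) ^ 2 * (φ t) ^ (2 * m + d - 1) * w t
        else 0) := by
  have hS := hSopen.measurableSet
  have hexp : ∀ m, 2 * m + d - 1 = 2 * m + (d - 1) := fun m => by omega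
  simp only [hexp]
  simp only [hexp, mul_assoc] at hqorth
  obtain ⟨p, hp⟩ := exists_eval_eq_sq_of_linear_or_sqrt_quadratic hφ
  have hint := integrableOn_eval_mul_pow_mul hS hp fun k => by
    simpa only [mul_assoc] using hmom k
  have hqnat : ∀ m j, (q m j).natDegree = j := fun m j =>
    Polynomial.natDegree_eq_of_degree_eq_some (hqdeg m j)
  have horth : ∀ m i j, i ≠ j → ∫ t in Sset,
      (q m i).eval t * ((q m j).eval t * (φ t ^ (2 * m + (d - 1)) * w t)) = 0 :=
    fun m i j => integral_eval_mul_eval_eq_zero_of_ne (hqnat m)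
      (fun j k _ => by simpa [mul_assoc] using (hint m (q m j * .X ^ k)).integrable) (hqorth m)
  have hnorm : ∀ m j, 0 < ∫ t in Sset,
      (q m j).eval t ^ 2 * (φ t ^ (2 * m + (d - 1)) * w t) := fun m j =>
    setIntegral_eval_sq_mul_pow_mul_pos hS (by omega) hφ0 hw0 hmass
      (fun h => by simpa [h] using hqdeg m j) m
      (by simpa only [Polynomial.eval_pow] using hint m (q m j ^ (2 : ℕ)))
  have hcwA : 0 < cw * sphArea d :=
    pos_of_mul_pos_left (by rw [mul_assoc, hcw]; exact one_pos) hmass.le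
  have hsph : ∀ m ℓ m' ℓ', ℓ ∈ Finset.Icc 1 (harmDim d m) →
      ℓ' ∈ Finset.Icc 1 (harmDim d m') →
      ∫ ξ : Metric.sphere (0 : EuclideanSpace ℝ (Fin d)) 1,
        MvPolynomial.eval (ξ : EuclideanSpace ℝ (Fin d)) (Y m ℓ) *
        MvPolynomial.eval (ξ : EuclideanSpace ℝ (Fin d)) (Y m' ℓ') ∂(sphMeas d) =
      sphArea d * if m = m' ∧ ℓ = ℓ' then 1 else 0 := fun m ℓ m' ℓ' hℓ hℓ' =>
    (inv_mul_eq_iff_eq_mul₀ (right_ne_zero_of_mul hcwA.ne')).1 (hYorth m ℓ m' ℓ' hℓ hℓ')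
  intro n m ℓ hm hℓ
  have hY := hYhom m ℓ hℓ
  refine ⟨fun x t ht => hY.pow_mul_eval_div ht x, ?_,
    by simpa only [mul_assoc] using mul_pos hcwA (hnorm m (n - m)), fun n' m' ℓ' hm' hℓ' => ?_⟩
  · simpa [Nat.add_sub_cancel' hm] using
      MvPolynomial.exists_totalDegree_le_eval_snoc_eq_eval_mul_eval hY.totalDegree_le
        (hqnat m (n - m)).le
  · rw [integral_mul_integral_eval_smul_mul_eval_smul hY (hYhom m' ℓ' hℓ'),
      hsph m ℓ m' ℓ' hℓ hℓ']
    by_cases hmℓ : m = m' ∧ ℓ = ℓ'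
    · obtain ⟨rfl, rfl⟩ := hmℓ
      by_cases hn : n = n'
      · subst hn
        simp only [← two_mul, ← sq, and_self, if_true, mul_one, ← mul_assoc]
      · rw [← two_mul, horth m _ _ (by omega)]
        simp [hn]
    · simp [hmℓ]

/-- Orthogonal polynomials on a quadratic surface of revolution: with
`S_{m,ℓ}^n(x,t) = q_{n−m}^{(m)}(t) φ(t)^m Y_ℓ^m(x/φ(t))`, one has
`S_{m,ℓ}^n(x,t) = q_{n−m}^{(m)}(t) Y_ℓ^m(x)`, a polynomial of degree at most `n`, and
`⟨S_{m,ℓ}^n, S_{m',ℓ'}^{n'}⟩_w = h_m^n δ_{n,n'} δ_{m,m'} δ_{ℓ,ℓ'}` with `h_m^n > 0`. -/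
theorem surface_orthogonal_basis
    (d : ℕ) (hd : 2 ≤ d)
    (Sset : Set ℝ) (hSopen : IsOpen Sset)
    (φ : ℝ → ℝ) (hφ0 : ∀ t ∈ Sset, 0 ≤ φ t)
    (hφ : (∃ c1 c0 : ℝ, ∀ t ∈ Sset, φ t = c1 * t + c0) ∨
      (∃ c2 c1 c0 : ℝ, (∀ t ∈ Sset, 0 ≤ c2 * t ^ 2 + c1 * t + c0) ∧
        ∀ t ∈ Sset, φ t = Real.sqrt (c2 * t ^ 2 + c1 * t + c0)))
    (w : ℝ → ℝ) (hw0 : ∀ t ∈ Sset, 0 ≤ w t)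
    (hmom : ∀ k : ℕ, IntegrableOn (fun t => |t| ^ k * (φ t) ^ (d - 1) * w t) Sset)
    (hmass : 0 < ∫ t in Sset, (φ t) ^ (d - 1) * w t)
    -- the orthogonal polynomials `q_j^{(m)}` with respect to `φ(t)^{2m+d−1} w(t)` on `S`
    (q : ℕ → ℕ → Polynomial ℝ)
    (hqdeg : ∀ m j, (q m j).degree = j)
    (hqorth : ∀ m j k, k < j →
      ∫ t in Sset, (q m j).eval t * t ^ k * (φ t) ^ (2 * m + d - 1) * w t = 0)
    -- an orthonormal basis of spherical harmonics `Y_ℓ^m`, `1 ≤ ℓ ≤ dim H_m^d`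
    (Y : ℕ → ℕ → MvPolynomial (Fin d) ℝ)
    (hYhom : ∀ m ℓ, ℓ ∈ Finset.Icc 1 (harmDim d m) → (Y m ℓ).IsHomogeneous m)
    (hYharm : ∀ m ℓ, ℓ ∈ Finset.Icc 1 (harmDim d m) → laplacianLM d (Y m ℓ) = 0)
    (hYorth : ∀ m ℓ m' ℓ', ℓ ∈ Finset.Icc 1 (harmDim d m) →
      ℓ' ∈ Finset.Icc 1 (harmDim d m') →
      (sphArea d)⁻¹ *
        ∫ ξ : Metric.sphere (0 : EuclideanSpace ℝ (Fin d)) 1,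
          MvPolynomial.eval (ξ : EuclideanSpace ℝ (Fin d)) (Y m ℓ) *
          MvPolynomial.eval (ξ : EuclideanSpace ℝ (Fin d)) (Y m' ℓ') ∂(sphMeas d) =
        if m = m' ∧ ℓ = ℓ' then 1 else 0)
    -- the normalization constant `c_w`, with `⟨1,1⟩_w = 1`
    (cw : ℝ) (hcw : cw * (sphArea d * ∫ t in Sset, (φ t) ^ (d - 1) * w t) = 1) :
    ∀ n m ℓ : ℕ, m ≤ n → ℓ ∈ Finset.Icc 1 (harmDim d m) →
      -- (1) `φ(t)^m Y_ℓ^m(x/φ(t)) = Y_ℓ^m(x)`, so `S_{m,ℓ}^n` is a polynomial of degree ≤ n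
      (∀ (x : Fin d → ℝ) (t : ℝ), φ t ≠ 0 →
        (φ t) ^ m * MvPolynomial.eval (fun i => x i / φ t) (Y m ℓ) =
          MvPolynomial.eval x (Y m ℓ)) ∧
      (∃ P : MvPolynomial (Fin (d + 1)) ℝ, P.totalDegree ≤ n ∧
        ∀ (x : Fin d → ℝ) (t : ℝ), MvPolynomial.eval (Fin.snoc x t) P =
          (q m (n - m)).eval t * MvPolynomial.eval x (Y m ℓ)) ∧
      -- (2) orthogonality `⟨S_{m,ℓ}^n, S_{m',ℓ'}^{n'}⟩_w = h_m^n δ δ δ` with `h_m^n > 0`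
      (0 < cw * sphArea d *
          ∫ t in Sset, ((q m (n - m)).eval t) ^ 2 * (φ t) ^ (2 * m + d - 1) * w t) ∧
      (∀ n' m' ℓ' : ℕ, m' ≤ n' → ℓ' ∈ Finset.Icc 1 (harmDim d m') →
        cw * ∫ t in Sset, (φ t) ^ (d - 1) *
          (∫ ξ : Metric.sphere (0 : EuclideanSpace ℝ (Fin d)) 1,
            ((q m (n - m)).eval t *
              MvPolynomial.eval (φ t • (ξ : EuclideanSpace ℝ (Fin d))) (Y m ℓ)) *
            ((q m' (n' - m')).eval t *
              MvPolynomial.eval (φ t • (ξ : EuclideanSpace ℝ (Fin d))) (Y m' ℓ'))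
            ∂(sphMeas d)) * w t =
        if n = n' ∧ m = m' ∧ ℓ = ℓ' then
          cw * sphArea d *
            ∫ t in Sset, ((q m (n - m)).eval t) ^ 2 * (φ t) ^ (2 * m + d - 1) * w t
        else 0) :=
  surface_orthogonal_basis_general d hd Sset hSopen φ hφ0 hφ w hw0 hmom hmass q hqdeg hqorth Y hYhom
    hYorth cw hcw
end
end

section
/- Let d ≥ 2, α > −d, β > −1. For 0 ≤ m ≤ n and 1 ≤ ℓ ≤ dim H_m^d, define S_{m,ℓ}^n(x,t) := P_{n−m}^{(α+2m+d−1, β)}(1−2t) · Y_ℓ^m(x). Then these functions are mutually orthogonal on the surface of the finite cone with respect to the Jacobi weight t^α(1−t)^β: for (n,m,ℓ) ≠ (n',m',ℓ'), ∫_0^1 t^{d−1} (∫_{S^{d−1}} S_{m,ℓ}^n(tξ, t) S_{m',ℓ'}^{n'}(tξ, t) dσ(ξ)) t^α (1−t)^β dt = 0, while the integral is strictly positive when (n,m,ℓ) = (n',m',ℓ'). -/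
open MeasureTheory MvPolynomial Real
open scoped ENNReal

noncomputable section

/-- `p` is a Jacobi polynomial of degree `n` with parameters `(a, b)`: it has degree `n`
and is orthogonal to all lower degrees with respect to `(1−t)^a (1+t)^b` on `(−1,1)`. -/
def IsJacobi (a b : ℝ) (n : ℕ) (p : Polynomial ℝ) : Prop :=
  p.degree = n ∧ ∀ k < n,
    ∫ t in Set.Ioo (-1 : ℝ) 1, p.eval t * t ^ k * (1 - t) ^ a * (1 + t) ^ b = 0

/- ### Auxiliary lemmas -/

lemma homog_eval_smul {d m : ℕ} {p : MvPolynomial (Fin d) ℝ} (hp : p.IsHomogeneous m)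
    (c : ℝ) (x : Fin d → ℝ) : eval (c • x) p = c ^ m * eval x p := by
  rw [eval_eq', eval_eq', Finset.mul_sum]
  refine Finset.sum_congr rfl fun dd hdd => ?_
  have hdeg : ∑ i, dd i = m := by
    have h := hp (mem_support_iff.mp hdd)
    simpa [Finsupp.weight, Finsupp.linearCombination, Finsupp.sum_fintype] using h
  calc coeff dd p * ∏ i, (c • x) i ^ dd i
      = coeff dd p * ∏ i, (c ^ dd i * x i ^ dd i) := by
        simp [mul_pow]
    _ = c ^ m * (coeff dd p * ∏ i, x i ^ dd i) := by
        rw [Finset.prod_mul_distrib, Finset.prod_pow_eq_pow_sum, hdeg]; ring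

lemma homog_eval_smul' {d m : ℕ} {p : MvPolynomial (Fin d) ℝ} (hp : p.IsHomogeneous m)
    (c : ℝ) (x : EuclideanSpace ℝ (Fin d)) : eval (c • x) p = c ^ m * eval x p :=
  homog_eval_smul hp c x

lemma weight_int {a b : ℝ} (ha : -1 < a) (hb : -1 < b) :
    IntegrableOn (fun t : ℝ => t ^ a * (1 - t) ^ b) (Set.Ioo (0:ℝ) 1) := by
  have h := (Complex.betaIntegral_convergent (u := (a+1 : ℂ)) (v := (b+1 : ℂ))
    (by simpa using by linarith) (by simpa using by linarith)).1
  have h2 : IntegrableOn (fun x : ℝ => (x:ℂ) ^ (a:ℂ) * (1-(x:ℂ)) ^ (b:ℂ)) (Set.Ioo (0:ℝ) 1) := by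
    have h' : IntegrableOn (fun x : ℝ => (x:ℂ) ^ ((a:ℂ)+1-1) * (1-(x:ℂ)) ^ ((b:ℂ)+1-1))
        (Set.Ioc (0:ℝ) 1) := h
    simpa using h'.mono_set Set.Ioo_subset_Ioc_self
  have h3 : IntegrableOn (fun x : ℝ => ((x ^ a * (1-x) ^ b : ℝ) : ℂ)) (Set.Ioo (0:ℝ) 1) := by
    refine h2.congr_fun (fun x hx => ?_) measurableSet_Ioo
    rw [Complex.ofReal_mul, Complex.ofReal_cpow hx.1.le,
      Complex.ofReal_cpow (by linarith [hx.2] : (0:ℝ) ≤ 1 - x)]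
    push_cast; ring
  simpa [IntegrableOn] using h3.re

lemma cont_weight_int {f : ℝ → ℝ} (hf : Continuous f) {a b : ℝ} (ha : -1 < a) (hb : -1 < b) :
    IntegrableOn (fun t : ℝ => f t * (t ^ a * (1 - t) ^ b)) (Set.Ioo (0:ℝ) 1) := by
  obtain ⟨C, hC⟩ := (isCompact_Icc (a := (0:ℝ)) (b := 1)).exists_bound_of_continuousOn
    hf.continuousOn
  refine Integrable.bdd_mul (c := C) (weight_int ha hb)
    (hf.aestronglyMeasurable) ?_
  filter_upwards [ae_restrict_mem measurableSet_Ioo] with t ht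
  exact hC t ⟨ht.1.le, ht.2.le⟩

lemma cov_Ioo (g : ℝ → ℝ) :
    ∫ s in Set.Ioo (-1:ℝ) 1, g s = ∫ t in Set.Ioo (0:ℝ) 1, 2 * g (1 - 2*t) := by
  have himg : (fun t : ℝ => 1 - 2*t) '' Set.Ioo (0:ℝ) 1 = Set.Ioo (-1:ℝ) 1 := by
    ext s
    constructor
    · rintro ⟨t, ht, rfl⟩
      exact ⟨by simp only; linarith [ht.2], by simp only; linarith [ht.1]⟩
    · intro hs; exact ⟨(1 - s)/2, ⟨by linarith [hs.2], by linarith [hs.1]⟩, by simp only; ring⟩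
  have hderiv : ∀ x ∈ Set.Ioo (0:ℝ) 1,
      HasDerivWithinAt (fun t : ℝ => 1 - 2*t) (-2) (Set.Ioo (0:ℝ) 1) x := fun x _ => by
    simpa using (((hasDerivAt_id x).const_mul 2).const_sub 1).hasDerivWithinAt
      (s := Set.Ioo (0:ℝ) 1)
  have hinj : Set.InjOn (fun t : ℝ => 1 - 2*t) (Set.Ioo (0:ℝ) 1) := fun x _ y _ h => by
    dsimp at h; linarith
  have := integral_image_eq_integral_abs_deriv_smul measurableSet_Ioo hderiv hinj g
  rw [himg] at this
  rw [this]
  refine setIntegral_congr_fun measurableSet_Ioo fun t _ => ?_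
  norm_num

lemma jacobi_orth01 {a b : ℝ} (ha : -1 < a) (hb : -1 < b) {j : ℕ} {p : Polynomial ℝ}
    (hp : IsJacobi a b j p) {k : ℕ} (hk : k < j) :
    ∫ t in Set.Ioo (0:ℝ) 1, p.eval (1 - 2*t) * (1 - 2*t) ^ k * (t ^ a * (1 - t) ^ b) = 0 := by
  have h := hp.2 k hk
  rw [cov_Ioo] at h
  have h3 : (∫ t in Set.Ioo (0:ℝ) 1,
      2 * (p.eval (1 - 2*t) * (1 - 2*t) ^ k * (1 - (1 - 2*t)) ^ a * (1 + (1 - 2*t)) ^ b)) =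
      ∫ t in Set.Ioo (0:ℝ) 1, (2 * (2:ℝ) ^ a * 2 ^ b) *
        (p.eval (1 - 2*t) * (1 - 2*t) ^ k * (t ^ a * (1 - t) ^ b)) := by
    refine setIntegral_congr_fun measurableSet_Ioo fun t ht => ?_
    have h1t : (1:ℝ) - (1 - 2*t) = 2 * t := by ring
    have h2t : (1:ℝ) + (1 - 2*t) = 2 * (1 - t) := by ring
    rw [h1t, h2t, Real.mul_rpow (by norm_num) ht.1.le,
      Real.mul_rpow (by norm_num) (by linarith [ht.2])]
    ring
  rw [h3, integral_const_mul] at h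
  have hne : (2 * (2:ℝ) ^ a * 2 ^ b) ≠ 0 := by positivity
  exact (mul_eq_zero.mp h).resolve_left hne

lemma jacobi_prod_orth {a b : ℝ} (ha : -1 < a) (hb : -1 < b) {k k' : ℕ} (hkk : k < k')
    {p q : Polynomial ℝ} (hp : IsJacobi a b k p) (hq : IsJacobi a b k' q) :
    ∫ t in Set.Ioo (0:ℝ) 1, p.eval (1 - 2*t) * q.eval (1 - 2*t) * (t ^ a * (1 - t) ^ b) = 0 := by
  have hdeg : p.natDegree < k + 1 :=
    Nat.lt_succ_of_le (Polynomial.natDegree_le_iff_degree_le.2 (le_of_eq hp.1))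
  have heval : ∀ s : ℝ, p.eval s = ∑ i ∈ Finset.range (k+1), p.coeff i * s ^ i := fun s =>
    Polynomial.eval_eq_sum_range' hdeg s
  have hsplit : (∫ t in Set.Ioo (0:ℝ) 1,
        p.eval (1 - 2*t) * q.eval (1 - 2*t) * (t ^ a * (1 - t) ^ b)) =
      ∫ t in Set.Ioo (0:ℝ) 1, ∑ i ∈ Finset.range (k+1),
        p.coeff i * (q.eval (1 - 2*t) * (1 - 2*t) ^ i * (t ^ a * (1 - t) ^ b)) := by
    refine setIntegral_congr_fun measurableSet_Ioo fun t _ => ?_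
    rw [heval (1 - 2*t), Finset.sum_mul, Finset.sum_mul]
    exact Finset.sum_congr rfl fun i _ => by ring
  rw [hsplit, integral_finset_sum]
  · refine Finset.sum_eq_zero fun i hi => ?_
    rw [integral_const_mul, jacobi_orth01 ha hb hq
      (lt_of_lt_of_le (Finset.mem_range.mp hi) hkk), mul_zero]
  · intro i _
    have hcont : Continuous fun t : ℝ => p.coeff i * (q.eval (1 - 2*t) * (1 - 2*t) ^ i) := by
      fun_prop
    have := cont_weight_int hcont ha hb
    refine this.congr_fun (fun t _ => by ring) measurableSet_Ioo

lemma jacobi_sq_pos {a b : ℝ} (ha : -1 < a) (hb : -1 < b) {k : ℕ} {q : Polynomial ℝ}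
    (hq : IsJacobi a b k q) :
    0 < ∫ t in Set.Ioo (0:ℝ) 1, q.eval (1 - 2*t) ^ 2 * (t ^ a * (1 - t) ^ b) := by
  have hq0 : q ≠ 0 := fun h => by simp [h] at hq; exact absurd hq.1 (by simp)
  set f : ℝ → ℝ := fun t => q.eval (1 - 2*t) ^ 2 * (t ^ a * (1 - t) ^ b) with hf
  have hnn : 0 ≤ᵐ[volume.restrict (Set.Ioo (0:ℝ) 1)] f := by
    filter_upwards [ae_restrict_mem measurableSet_Ioo] with t ht
    have := Real.rpow_pos_of_pos ht.1 a
    have := Real.rpow_pos_of_pos (by linarith [ht.2] : (0:ℝ) < 1 - t) b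
    positivity
  have hint : IntegrableOn f (Set.Ioo (0:ℝ) 1) := by
    have : Continuous fun t : ℝ => q.eval (1 - 2*t) ^ 2 := by fun_prop
    exact cont_weight_int this ha hb
  rw [setIntegral_pos_iff_support_of_nonneg_ae hnn hint]
  have hZ : volume ({t : ℝ | (1 - 2*t) ∈ {x | q.IsRoot x}}) = 0 := by
    have hroots : Set.Finite {x : ℝ | q.IsRoot x} := Polynomial.finite_setOf_isRoot hq0
    have : Set.Finite {t : ℝ | (1 - 2*t) ∈ {x | q.IsRoot x}} := by
      refine Set.Finite.preimage ?_ hroots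
      intro x _ y _ h; dsimp at h; linarith
    exact this.measure_zero _
  have hsub : Set.Ioo (0:ℝ) 1 \ {t : ℝ | (1 - 2*t) ∈ {x | q.IsRoot x}} ⊆
      Function.support f ∩ Set.Ioo (0:ℝ) 1 := by
    rintro t ⟨ht, hroot⟩
    refine ⟨?_, ht⟩
    have h1 := Real.rpow_pos_of_pos ht.1 a
    have h2 := Real.rpow_pos_of_pos (by linarith [ht.2] : (0:ℝ) < 1 - t) b
    have h3 : q.eval (1 - 2*t) ≠ 0 := hroot
    simp only [hf, Function.mem_support]
    positivity
  calc (0:ℝ≥0∞) < 1 := by norm_num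
    _ = volume (Set.Ioo (0:ℝ) 1 \ {t : ℝ | (1 - 2*t) ∈ {x | q.IsRoot x}}) := by
        rw [measure_diff_null hZ, Real.volume_Ioo]; norm_num
    _ ≤ volume (Function.support f ∩ Set.Ioo (0:ℝ) 1) := measure_mono hsub

lemma sphMeas_univ_ne_zero {d : ℕ} (hd : 2 ≤ d) : sphMeas d Set.univ ≠ 0 := by
  rw [sphMeas, MeasureTheory.Measure.toSphere_apply_univ]
  have h1 : (0:ℝ≥0∞) < Module.finrank ℝ (EuclideanSpace ℝ (Fin d)) := by
    simp [finrank_euclideanSpace_fin]; omega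
  have h2 : 0 < (volume : Measure (EuclideanSpace ℝ (Fin d))) (Metric.ball 0 1) :=
    Metric.measure_ball_pos _ _ one_pos
  intro h
  rcases mul_eq_zero.mp h with h | h
  · exact absurd h h1.ne'
  · exact absurd h h2.ne'

lemma sphMeas_univ_ne_top {d : ℕ} : sphMeas d Set.univ ≠ ⊤ := by
  rw [sphMeas, MeasureTheory.Measure.toSphere_apply_univ]
  exact ENNReal.mul_ne_top (by simp) measure_ball_lt_top.ne

lemma sphArea_pos {d : ℕ} (hd : 2 ≤ d) : 0 < sphArea d :=
  ENNReal.toReal_pos (sphMeas_univ_ne_zero hd) sphMeas_univ_ne_top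
/-- For `d ≥ 2`, `α > −d`, `β > −1`, the functions
`S_{m,ℓ}^n(x,t) = P_{n−m}^{(α+2m+d−1,β)}(1−2t) Y_ℓ^m(x)` are mutually orthogonal on the
surface of the finite cone with respect to the Jacobi weight `t^α (1−t)^β`, and the
corresponding norms are strictly positive. -/
theorem cone_surface_orthogonality
    (d : ℕ) (hd : 2 ≤ d) (α β : ℝ) (hα : -(d : ℝ) < α) (hβ : -1 < β)
    -- the Jacobi polynomials
    (J : ℕ → ℝ → ℝ → Polynomial ℝ)
    (hJ : ∀ (j : ℕ) (a b : ℝ), -1 < a → -1 < b → IsJacobi a b j (J j a b))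
    -- an orthonormal basis of spherical harmonics `Y_ℓ^m`, `1 ≤ ℓ ≤ dim H_m^d`
    (Y : ℕ → ℕ → MvPolynomial (Fin d) ℝ)
    (hYhom : ∀ m ℓ, ℓ ∈ Finset.Icc 1 (harmDim d m) → (Y m ℓ).IsHomogeneous m)
    (hYharm : ∀ m ℓ, ℓ ∈ Finset.Icc 1 (harmDim d m) → laplacianLM d (Y m ℓ) = 0)
    (hYorth : ∀ m ℓ m' ℓ', ℓ ∈ Finset.Icc 1 (harmDim d m) →
      ℓ' ∈ Finset.Icc 1 (harmDim d m') →
      (sphArea d)⁻¹ *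
        ∫ ξ : Metric.sphere (0 : EuclideanSpace ℝ (Fin d)) 1,
          MvPolynomial.eval (ξ : EuclideanSpace ℝ (Fin d)) (Y m ℓ) *
          MvPolynomial.eval (ξ : EuclideanSpace ℝ (Fin d)) (Y m' ℓ') ∂(sphMeas d) =
        if m = m' ∧ ℓ = ℓ' then 1 else 0) :
    -- with `S_{m,ℓ}^n(x,t) = P_{n−m}^{(α+2m+d−1,β)}(1−2t) Y_ℓ^m(x)`
    ∀ n m ℓ n' m' ℓ' : ℕ, m ≤ n → ℓ ∈ Finset.Icc 1 (harmDim d m) →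
      m' ≤ n' → ℓ' ∈ Finset.Icc 1 (harmDim d m') →
      (((n, m, ℓ) ≠ (n', m', ℓ')) →
        ∫ t in Set.Ioo (0 : ℝ) 1, (t ^ (d - 1) *
          (∫ ξ : Metric.sphere (0 : EuclideanSpace ℝ (Fin d)) 1,
            ((J (n - m) (α + 2 * m + d - 1) β).eval (1 - 2 * t) *
              MvPolynomial.eval (t • (ξ : EuclideanSpace ℝ (Fin d))) (Y m ℓ)) *
            ((J (n' - m') (α + 2 * m' + d - 1) β).eval (1 - 2 * t) *
              MvPolynomial.eval (t • (ξ : EuclideanSpace ℝ (Fin d))) (Y m' ℓ'))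
            ∂(sphMeas d))) * (t ^ α * (1 - t) ^ β) = 0) ∧
      (0 < ∫ t in Set.Ioo (0 : ℝ) 1, (t ^ (d - 1) *
          (∫ ξ : Metric.sphere (0 : EuclideanSpace ℝ (Fin d)) 1,
            ((J (n - m) (α + 2 * m + d - 1) β).eval (1 - 2 * t) *
              MvPolynomial.eval (t • (ξ : EuclideanSpace ℝ (Fin d))) (Y m ℓ)) ^ 2
            ∂(sphMeas d))) * (t ^ α * (1 - t) ^ β)) := by
  intro n m ℓ n' m' ℓ' hmn hℓ hmn' hℓ'
  have hd2 : (2:ℝ) ≤ (d:ℝ) := by exact_mod_cast hd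
  have hsA := sphArea_pos hd
  have hpar : ∀ mm : ℕ, (-1:ℝ) < α + 2 * mm + d - 1 := fun mm => by
    have : (0:ℝ) ≤ 2 * (mm:ℝ) := by positivity
    linarith
  have hYint : ∀ m ℓ m' ℓ', ℓ ∈ Finset.Icc 1 (harmDim d m) →
      ℓ' ∈ Finset.Icc 1 (harmDim d m') →
      (∫ ξ : Metric.sphere (0 : EuclideanSpace ℝ (Fin d)) 1,
          MvPolynomial.eval (ξ : EuclideanSpace ℝ (Fin d)) (Y m ℓ) *
          MvPolynomial.eval (ξ : EuclideanSpace ℝ (Fin d)) (Y m' ℓ') ∂(sphMeas d)) =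
        sphArea d * (if m = m' ∧ ℓ = ℓ' then 1 else 0) := by
    intro m ℓ m' ℓ' h1 h2
    rw [← hYorth m ℓ m' ℓ' h1 h2, ← mul_assoc, mul_inv_cancel₀ hsA.ne', one_mul]
  have key : ∀ t : ℝ,
      (∫ ξ : Metric.sphere (0 : EuclideanSpace ℝ (Fin d)) 1,
        ((J (n - m) (α + 2 * m + d - 1) β).eval (1 - 2 * t) *
          MvPolynomial.eval (t • (ξ : EuclideanSpace ℝ (Fin d))) (Y m ℓ)) *
        ((J (n' - m') (α + 2 * m' + d - 1) β).eval (1 - 2 * t) *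
          MvPolynomial.eval (t • (ξ : EuclideanSpace ℝ (Fin d))) (Y m' ℓ'))
        ∂(sphMeas d)) =
      ((J (n - m) (α + 2 * m + d - 1) β).eval (1 - 2 * t) *
        (J (n' - m') (α + 2 * m' + d - 1) β).eval (1 - 2 * t) * t ^ (m + m')) *
        (sphArea d * (if m = m' ∧ ℓ = ℓ' then 1 else 0)) := by
    intro t
    have hfun : (fun ξ : Metric.sphere (0 : EuclideanSpace ℝ (Fin d)) 1 =>
        ((J (n - m) (α + 2 * m + d - 1) β).eval (1 - 2 * t) *
          MvPolynomial.eval (t • (ξ : EuclideanSpace ℝ (Fin d))) (Y m ℓ)) *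
        ((J (n' - m') (α + 2 * m' + d - 1) β).eval (1 - 2 * t) *
          MvPolynomial.eval (t • (ξ : EuclideanSpace ℝ (Fin d))) (Y m' ℓ'))) =
        fun ξ : Metric.sphere (0 : EuclideanSpace ℝ (Fin d)) 1 =>
        ((J (n - m) (α + 2 * m + d - 1) β).eval (1 - 2 * t) *
          (J (n' - m') (α + 2 * m' + d - 1) β).eval (1 - 2 * t) * t ^ (m + m')) *
        (MvPolynomial.eval (ξ : EuclideanSpace ℝ (Fin d)) (Y m ℓ) *
          MvPolynomial.eval (ξ : EuclideanSpace ℝ (Fin d)) (Y m' ℓ')) := by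
      funext ξ
      rw [homog_eval_smul' (hYhom m ℓ hℓ) t _, homog_eval_smul' (hYhom m' ℓ' hℓ') t _, pow_add]
      ring
    rw [hfun, integral_const_mul, hYint m ℓ m' ℓ' hℓ hℓ']
  have key2 : ∀ t : ℝ,
      (∫ ξ : Metric.sphere (0 : EuclideanSpace ℝ (Fin d)) 1,
        ((J (n - m) (α + 2 * m + d - 1) β).eval (1 - 2 * t) *
          MvPolynomial.eval (t • (ξ : EuclideanSpace ℝ (Fin d))) (Y m ℓ)) ^ 2
        ∂(sphMeas d)) =
      ((J (n - m) (α + 2 * m + d - 1) β).eval (1 - 2 * t) ^ 2 * t ^ (m + m)) * sphArea d := by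
    intro t
    have hfun : (fun ξ : Metric.sphere (0 : EuclideanSpace ℝ (Fin d)) 1 =>
        ((J (n - m) (α + 2 * m + d - 1) β).eval (1 - 2 * t) *
          MvPolynomial.eval (t • (ξ : EuclideanSpace ℝ (Fin d))) (Y m ℓ)) ^ 2) =
        fun ξ : Metric.sphere (0 : EuclideanSpace ℝ (Fin d)) 1 =>
        ((J (n - m) (α + 2 * m + d - 1) β).eval (1 - 2 * t) ^ 2 * t ^ (m + m)) *
        (MvPolynomial.eval (ξ : EuclideanSpace ℝ (Fin d)) (Y m ℓ) *
          MvPolynomial.eval (ξ : EuclideanSpace ℝ (Fin d)) (Y m ℓ)) := by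
      funext ξ
      rw [homog_eval_smul' (hYhom m ℓ hℓ) t _, pow_add]
      ring
    rw [hfun, integral_const_mul, hYint m ℓ m ℓ hℓ hℓ, if_pos ⟨rfl, rfl⟩, mul_one]
  have hpow : ∀ mm : ℕ, ∀ t ∈ Set.Ioo (0:ℝ) 1,
      t ^ (α + 2 * mm + d - 1) = t ^ (d - 1) * t ^ (mm + mm) * t ^ α := by
    intro mm t ht
    have hcast : α + 2 * (mm:ℝ) + d - 1 = ((d - 1 : ℕ) : ℝ) + ((mm + mm : ℕ) : ℝ) + α := by
      push_cast [Nat.cast_sub (by omega : 1 ≤ d)]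
      ring
    rw [hcast, Real.rpow_add ht.1, Real.rpow_add ht.1, Real.rpow_natCast, Real.rpow_natCast]
  constructor
  · -- orthogonality
    intro hne
    by_cases hmm : m = m' ∧ ℓ = ℓ'
    · obtain ⟨h1, h2⟩ := hmm
      subst h1; subst h2
      have hnn' : n ≠ n' := fun h => hne (by rw [h])
      have hcongr : Set.EqOn
          (fun t : ℝ => (t ^ (d - 1) *
            (∫ ξ : Metric.sphere (0 : EuclideanSpace ℝ (Fin d)) 1,
              ((J (n - m) (α + 2 * m + d - 1) β).eval (1 - 2 * t) *
                MvPolynomial.eval (t • (ξ : EuclideanSpace ℝ (Fin d))) (Y m ℓ)) *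
              ((J (n' - m) (α + 2 * m + d - 1) β).eval (1 - 2 * t) *
                MvPolynomial.eval (t • (ξ : EuclideanSpace ℝ (Fin d))) (Y m ℓ))
              ∂(sphMeas d))) * (t ^ α * (1 - t) ^ β))
          (fun t : ℝ => sphArea d *
            ((J (n - m) (α + 2 * m + d - 1) β).eval (1 - 2 * t) *
              (J (n' - m) (α + 2 * m + d - 1) β).eval (1 - 2 * t) *
              (t ^ (α + 2 * m + d - 1) * (1 - t) ^ β)))
          (Set.Ioo (0:ℝ) 1) := by
        intro t ht
        simp only
        rw [key t, if_pos ⟨rfl, rfl⟩, hpow m t ht]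
        ring
      rw [setIntegral_congr_fun measurableSet_Ioo hcongr, integral_const_mul]
      have hkk : n - m ≠ n' - m := by omega
      rcases lt_or_gt_of_ne hkk with h | h
      · rw [jacobi_prod_orth (hpar m) hβ h (hJ _ _ _ (hpar m) hβ) (hJ _ _ _ (hpar m) hβ),
          mul_zero]
      · have hswap : (∫ t in Set.Ioo (0:ℝ) 1,
            (J (n - m) (α + 2 * m + d - 1) β).eval (1 - 2 * t) *
            (J (n' - m) (α + 2 * m + d - 1) β).eval (1 - 2 * t) *
            (t ^ (α + 2 * m + d - 1) * (1 - t) ^ β)) =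
          ∫ t in Set.Ioo (0:ℝ) 1,
            (J (n' - m) (α + 2 * m + d - 1) β).eval (1 - 2 * t) *
            (J (n - m) (α + 2 * m + d - 1) β).eval (1 - 2 * t) *
            (t ^ (α + 2 * m + d - 1) * (1 - t) ^ β) :=
          setIntegral_congr_fun measurableSet_Ioo fun t _ => by ring
        rw [hswap,
          jacobi_prod_orth (hpar m) hβ h (hJ _ _ _ (hpar m) hβ) (hJ _ _ _ (hpar m) hβ),
          mul_zero]
    · -- different spherical harmonics: inner integral vanishes
      have : ∀ t ∈ Set.Ioo (0:ℝ) 1, (t ^ (d - 1) *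
          (∫ ξ : Metric.sphere (0 : EuclideanSpace ℝ (Fin d)) 1,
            ((J (n - m) (α + 2 * m + d - 1) β).eval (1 - 2 * t) *
              MvPolynomial.eval (t • (ξ : EuclideanSpace ℝ (Fin d))) (Y m ℓ)) *
            ((J (n' - m') (α + 2 * m' + d - 1) β).eval (1 - 2 * t) *
              MvPolynomial.eval (t • (ξ : EuclideanSpace ℝ (Fin d))) (Y m' ℓ'))
            ∂(sphMeas d))) * (t ^ α * (1 - t) ^ β) = 0 := by
        intro t _
        rw [key t, if_neg hmm]
        ring
      rw [setIntegral_congr_fun measurableSet_Ioo this]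
      simp
  · -- positivity
    have hcongr2 : Set.EqOn
        (fun t : ℝ => (t ^ (d - 1) *
          (∫ ξ : Metric.sphere (0 : EuclideanSpace ℝ (Fin d)) 1,
            ((J (n - m) (α + 2 * m + d - 1) β).eval (1 - 2 * t) *
              MvPolynomial.eval (t • (ξ : EuclideanSpace ℝ (Fin d))) (Y m ℓ)) ^ 2
            ∂(sphMeas d))) * (t ^ α * (1 - t) ^ β))
        (fun t : ℝ => sphArea d *
          ((J (n - m) (α + 2 * m + d - 1) β).eval (1 - 2 * t) ^ 2 *
            (t ^ (α + 2 * m + d - 1) * (1 - t) ^ β)))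
        (Set.Ioo (0:ℝ) 1) := by
      intro t ht
      simp only
      rw [key2 t, hpow m t ht]
      ring
    rw [setIntegral_congr_fun measurableSet_Ioo hcongr2, integral_const_mul]
    exact mul_pos hsA (jacobi_sq_pos (hpar m) hβ (hJ _ _ _ (hpar m) hβ))
end
end

section
/- Let d ≥ 2, α > −(d+1)/2, β > −1. For 0 ≤ m ≤ n and 1 ≤ ℓ ≤ dim H_m^d, define S_{m,ℓ}^n(x,t) := P_{n−m}^{(α+m+(d−1)/2, β)}(1−2t) · t^{m/2} · Y_ℓ^m(x/√t), which by homogeneity equals P_{n−m}^{(α+m+(d−1)/2, β)}(1−2t) · Y_ℓ^m(x). Then these functions are mutually orthogonal on the surface of the paraboloid of revolution with respect to the weight t^α(1−t)^β: for (n,m,ℓ) ≠ (n',m',ℓ'), ∫_0^1 t^{(d−1)/2} (∫_{S^{d−1}} S_{m,ℓ}^n(√t ξ, t) S_{m',ℓ'}^{n'}(√t ξ, t) dσ(ξ)) t^α (1−t)^β dt = 0, while the integral is strictly positive when (n,m,ℓ) = (n',m',ℓ'). -/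
open MeasureTheory MvPolynomial Real

noncomputable section

open Set in
lemma weight_intervalIntegrable {a b : ℝ} (ha : -1 < a) (hb : -1 < b) :
    IntervalIntegrable (fun s => (1 - s) ^ a * (1 + s) ^ b) volume (-1) 1 := by
  have h1 : IntervalIntegrable (fun s => (1 - s) ^ a * (1 + s) ^ b) volume 0 1 := by
    have hi : IntervalIntegrable (fun s : ℝ => (1 - s) ^ a) volume 0 1 := by
      have := (intervalIntegral.intervalIntegrable_rpow' (r := a) ha (a := 0) (b := 1)).comp_sub_left 1
      simpa using this.symm
    have hc : ContinuousOn (fun s : ℝ => (1 + s) ^ b) (uIcc (0:ℝ) 1) := by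
      apply ContinuousOn.rpow_const (by fun_prop)
      intro x hx
      left
      rw [uIcc_of_le (by norm_num : (0:ℝ) ≤ 1)] at hx
      nlinarith [hx.1]
    exact hi.mul_continuousOn hc
  have h2 : IntervalIntegrable (fun s => (1 - s) ^ a * (1 + s) ^ b) volume (-1) 0 := by
    have hi : IntervalIntegrable (fun s : ℝ => (1 + s) ^ b) volume (-1) 0 := by
      have := (intervalIntegral.intervalIntegrable_rpow' (r := b) hb (a := 0) (b := 1)).comp_add_left 1
      simpa using this
    have hc : ContinuousOn (fun s : ℝ => (1 - s) ^ a) (uIcc (-1:ℝ) 0) := by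
      apply ContinuousOn.rpow_const (by fun_prop)
      intro x hx
      left
      rw [uIcc_of_le (by norm_num : (-1:ℝ) ≤ 0)] at hx
      nlinarith [hx.2]
    have := hi.mul_continuousOn hc
    simpa [mul_comm] using this
  exact h2.trans h1

open Set in
lemma polyW {a b : ℝ} (ha : -1 < a) (hb : -1 < b) (r : Polynomial ℝ) :
    IntegrableOn (fun s => r.eval s * ((1 - s) ^ a * (1 + s) ^ b)) (Ioo (-1:ℝ) 1) := by
  have h := (weight_intervalIntegrable ha hb).mul_continuousOn
      (g := fun s => r.eval s) (Polynomial.continuousOn _)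
  have h2 := (intervalIntegrable_iff_integrableOn_Ioo_of_le (by norm_num : (-1:ℝ) ≤ 1)).mp h
  exact h2.congr_fun (fun s _ => by ring) measurableSet_Ioo

open Set in
lemma jacobi_orth {a b : ℝ} (ha : -1 < a) (hb : -1 < b) {j : ℕ} {q : Polynomial ℝ}
    (hq : IsJacobi a b j q) {p : Polynomial ℝ} (hp : p.natDegree < j) :
    ∫ s in Ioo (-1:ℝ) 1, p.eval s * q.eval s * ((1 - s) ^ a * (1 + s) ^ b) = 0 := by
  have hfun : EqOn (fun s => p.eval s * q.eval s * ((1 - s) ^ a * (1 + s) ^ b))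
      (fun s => ∑ i ∈ Finset.range (p.natDegree + 1),
        p.coeff i * (q.eval s * s ^ i * (1 - s) ^ a * (1 + s) ^ b)) (Ioo (-1:ℝ) 1) := by
    intro s _
    simp only
    rw [Polynomial.eval_eq_sum_range, Finset.sum_mul, Finset.sum_mul]
    exact Finset.sum_congr rfl fun i _ => by ring
  rw [setIntegral_congr_fun measurableSet_Ioo hfun, integral_finset_sum]
  · refine Finset.sum_eq_zero fun i hi => ?_
    rw [MeasureTheory.integral_const_mul,
      hq.2 i (by have := Finset.mem_range.mp hi; omega), mul_zero]
  · intro i _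
    have h := ((polyW ha hb (q * Polynomial.X ^ i)).const_mul (p.coeff i))
    exact MeasureTheory.IntegrableOn.congr_fun h (fun s _ => by simp only [Polynomial.eval_mul, Polynomial.eval_pow, Polynomial.eval_X]; ring) measurableSet_Ioo

open Set in
lemma pos_int {a b : ℝ} (ha : -1 < a) (hb : -1 < b) {p : Polynomial ℝ} (hp : p ≠ 0) :
    0 < ∫ s in Ioo (-1:ℝ) 1, (p.eval s) ^ 2 * ((1 - s) ^ a * (1 + s) ^ b) := by
  have hint : IntegrableOn (fun s => (p.eval s) ^ 2 * ((1 - s) ^ a * (1 + s) ^ b)) (Ioo (-1:ℝ) 1) :=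
    (polyW ha hb (p ^ 2)).congr_fun (fun s _ => by simp) measurableSet_Ioo
  have hnn : 0 ≤ᵐ[volume.restrict (Ioo (-1:ℝ) 1)]
      fun s => (p.eval s) ^ 2 * ((1 - s) ^ a * (1 + s) ^ b) := by
    filter_upwards [ae_restrict_mem measurableSet_Ioo] with s hs
    have h1 : (0:ℝ) < 1 - s := by linarith [hs.2]
    have h2 : (0:ℝ) < 1 + s := by linarith [hs.1]
    positivity
  rw [setIntegral_pos_iff_support_of_nonneg_ae hnn hint]
  have hsub : Ioo (-1:ℝ) 1 \ {x | p.IsRoot x} ⊆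
      (Function.support fun s => (p.eval s) ^ 2 * ((1 - s) ^ a * (1 + s) ^ b)) ∩ Ioo (-1:ℝ) 1 := by
    rintro x ⟨hx, hx0⟩
    refine ⟨?_, hx⟩
    rw [Function.mem_support]
    have h1 : (0:ℝ) < 1 - x := by linarith [hx.2]
    have h2 : (0:ℝ) < 1 + x := by linarith [hx.1]
    have h3 : p.eval x ≠ 0 := hx0
    positivity
  refine lt_of_lt_of_le ?_ (measure_mono hsub)
  rw [measure_diff_null ((Polynomial.finite_setOf_isRoot hp).measure_zero volume)]
  rw [Real.volume_Ioo]
  exact ENNReal.ofReal_pos.mpr (by norm_num)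

open Set in
lemma cov (g : ℝ → ℝ) :
    ∫ t in Ioo (0:ℝ) 1, g t = ∫ s in Ioo (-1:ℝ) 1, (1/2 : ℝ) * g ((1 - s)/2) := by
  have himg : (fun s : ℝ => (1 - s)/2) '' Ioo (-1:ℝ) 1 = Ioo (0:ℝ) 1 := by
    ext t
    constructor
    · rintro ⟨s, hs, rfl⟩
      exact ⟨by linarith [hs.2], by linarith [hs.1]⟩
    · intro ht
      exact ⟨1 - 2*t, ⟨by linarith [ht.2], by linarith [ht.1]⟩, by ring⟩
  have hderiv : ∀ x ∈ Ioo (-1:ℝ) 1, HasDerivWithinAt (fun s : ℝ => (1 - s)/2)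
      (-1/2 : ℝ) (Ioo (-1:ℝ) 1) x := by
    intro x _
    have : HasDerivAt (fun s : ℝ => (1 - s)/2) (-1/2) x := by
      simpa using (((hasDerivAt_id x).const_sub 1).div_const 2)
    exact this.hasDerivWithinAt
  have hinj : InjOn (fun s : ℝ => (1 - s)/2) (Ioo (-1:ℝ) 1) := by
    intro x _ y _ h
    simp only at h
    linarith
  have := integral_image_eq_integral_abs_deriv_smul measurableSet_Ioo hderiv hinj g
  rw [himg] at this
  rw [this]
  apply setIntegral_congr_fun measurableSet_Ioo
  intro s _
  simp only [smul_eq_mul]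
  norm_num

open Set in
lemma orth01 {a b : ℝ} (ha : -1 < a) (hb : -1 < b) {p q : Polynomial ℝ} {jq : ℕ}
    (hq : IsJacobi a b jq q) (hp : p.natDegree < jq) :
    ∫ t in Ioo (0:ℝ) 1, p.eval (1 - 2*t) * q.eval (1 - 2*t) * (t ^ a * (1 - t) ^ b) = 0 := by
  have h2a : (0:ℝ) < (2:ℝ) ^ a := rpow_pos_of_pos two_pos a
  have h2b : (0:ℝ) < (2:ℝ) ^ b := rpow_pos_of_pos two_pos b
  have key : EqOn (fun s : ℝ => (1/2 : ℝ) * (p.eval (1 - 2*((1-s)/2)) * q.eval (1 - 2*((1-s)/2)) *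
        (((1-s)/2) ^ a * (1 - (1-s)/2) ^ b)))
      (fun s => (1/(2 * 2^a * 2^b) : ℝ) * (p.eval s * q.eval s * ((1-s)^a * (1+s)^b)))
      (Ioo (-1:ℝ) 1) := by
    intro s hs
    simp only
    have e1 : 1 - 2*((1-s)/2) = s := by ring
    have e2 : 1 - (1-s)/2 = (1+s)/2 := by ring
    rw [e1, e2, Real.div_rpow (by linarith [hs.2]) (by norm_num),
      Real.div_rpow (by linarith [hs.1]) (by norm_num)]
    simp only [div_eq_mul_inv, mul_inv]
    ring
  calc ∫ t in Ioo (0:ℝ) 1, p.eval (1 - 2*t) * q.eval (1 - 2*t) * (t ^ a * (1 - t) ^ b)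
      = ∫ s in Ioo (-1:ℝ) 1, (1/(2 * 2^a * 2^b) : ℝ) *
          (p.eval s * q.eval s * ((1-s)^a * (1+s)^b)) := by
        rw [cov]
        exact setIntegral_congr_fun measurableSet_Ioo key
    _ = 0 := by rw [MeasureTheory.integral_const_mul, jacobi_orth ha hb hq hp, mul_zero]

open Set in
lemma orth01' {a b : ℝ} (ha : -1 < a) (hb : -1 < b) (Jf : ℕ → Polynomial ℝ)
    (hJf : ∀ j, IsJacobi a b j (Jf j)) {k k' : ℕ} (hkk : k ≠ k') :
    ∫ t in Ioo (0:ℝ) 1, (Jf k).eval (1 - 2*t) * (Jf k').eval (1 - 2*t) * (t ^ a * (1 - t) ^ b)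
      = 0 := by
  have hdeg : ∀ j, (Jf j).natDegree = j := fun j =>
    Polynomial.natDegree_eq_of_degree_eq_some (hJf j).1
  rcases hkk.lt_or_gt with h | h
  · exact orth01 ha hb (hJf k') (by rw [hdeg]; exact h)
  · calc ∫ t in Ioo (0:ℝ) 1, (Jf k).eval (1 - 2*t) * (Jf k').eval (1 - 2*t) * (t ^ a * (1 - t) ^ b)
        = ∫ t in Ioo (0:ℝ) 1, (Jf k').eval (1 - 2*t) * (Jf k).eval (1 - 2*t) *
            (t ^ a * (1 - t) ^ b) :=
          setIntegral_congr_fun measurableSet_Ioo (fun t _ => by ring)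
      _ = 0 := orth01 ha hb (hJf k) (by rw [hdeg]; exact h)

open Set in
lemma pos01 {a b : ℝ} (ha : -1 < a) (hb : -1 < b) {p : Polynomial ℝ} (hp : p ≠ 0) :
    0 < ∫ t in Ioo (0:ℝ) 1, (p.eval (1 - 2*t)) ^ 2 * (t ^ a * (1 - t) ^ b) := by
  have h2a : (0:ℝ) < (2:ℝ) ^ a := rpow_pos_of_pos two_pos a
  have h2b : (0:ℝ) < (2:ℝ) ^ b := rpow_pos_of_pos two_pos b
  have key : EqOn (fun s : ℝ => (1/2 : ℝ) * ((p.eval (1 - 2*((1-s)/2))) ^ 2 *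
        (((1-s)/2) ^ a * (1 - (1-s)/2) ^ b)))
      (fun s => (1/(2 * 2^a * 2^b) : ℝ) * ((p.eval s) ^ 2 * ((1-s)^a * (1+s)^b)))
      (Ioo (-1:ℝ) 1) := by
    intro s hs
    simp only
    have e1 : 1 - 2*((1-s)/2) = s := by ring
    have e2 : 1 - (1-s)/2 = (1+s)/2 := by ring
    rw [e1, e2, Real.div_rpow (by linarith [hs.2]) (by norm_num),
      Real.div_rpow (by linarith [hs.1]) (by norm_num)]
    simp only [div_eq_mul_inv, mul_inv]
    ring
  have heq : ∫ t in Ioo (0:ℝ) 1, (p.eval (1 - 2*t)) ^ 2 * (t ^ a * (1 - t) ^ b)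
      = (1/(2 * 2^a * 2^b) : ℝ) * ∫ s in Ioo (-1:ℝ) 1,
          (p.eval s) ^ 2 * ((1-s)^a * (1+s)^b) := by
    rw [cov, ← MeasureTheory.integral_const_mul]
    exact setIntegral_congr_fun measurableSet_Ioo key
  rw [heq]
  exact mul_pos (by positivity) (pos_int ha hb hp)

open Set in
lemma eval_smul_hom {d : ℕ} {p : MvPolynomial (Fin d) ℝ} {m : ℕ}
    (hp : p.IsHomogeneous m) (c : ℝ) (x : Fin d → ℝ) :
    eval (c • x) p = c ^ m * eval x p := by
  rw [eval_eq, eval_eq, Finset.mul_sum]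
  apply Finset.sum_congr rfl
  intro e he
  have hdeg : ∑ i ∈ e.support, e i = m := by
    have := hp (MvPolynomial.mem_support_iff.mp he)
    simpa [Finsupp.weight, Finsupp.linearCombination, Finsupp.sum] using this
  calc MvPolynomial.coeff e p * ∏ i ∈ e.support, (c • x) i ^ e i
      = MvPolynomial.coeff e p * ∏ i ∈ e.support, (c ^ e i * x i ^ e i) := by
        simp [mul_pow]
    _ = c ^ m * (MvPolynomial.coeff e p * ∏ i ∈ e.support, x i ^ e i) := by
        rw [Finset.prod_mul_distrib, Finset.prod_pow_eq_pow_sum, hdeg]; ring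

open Set in
lemma eval_smul_hom' {d : ℕ} {p : MvPolynomial (Fin d) ℝ} {m : ℕ}
    (hp : p.IsHomogeneous m) (c : ℝ) (x : EuclideanSpace ℝ (Fin d)) :
    eval (c • x) p = c ^ m * eval x p := eval_smul_hom hp c x


/-- For `d ≥ 2`, `α > −(d+1)/2`, `β > −1`, the functions
`S_{m,ℓ}^n(x,t) = P_{n−m}^{(α+m+(d−1)/2,β)}(1−2t) t^{m/2} Y_ℓ^m(x/√t)
 = P_{n−m}^{(α+m+(d−1)/2,β)}(1−2t) Y_ℓ^m(x)` are mutually orthogonal on the surface of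
the paraboloid of revolution with respect to the weight `t^α (1−t)^β`, with strictly
positive norms. -/
theorem paraboloid_surface_orthogonality
    (d : ℕ) (hd : 2 ≤ d) (α β : ℝ) (hα : -((d : ℝ) + 1) / 2 < α) (hβ : -1 < β)
    (J : ℕ → ℝ → ℝ → Polynomial ℝ)
    (hJ : ∀ (j : ℕ) (a b : ℝ), -1 < a → -1 < b → IsJacobi a b j (J j a b))
    -- an orthonormal basis of spherical harmonics `Y_ℓ^m`, `1 ≤ ℓ ≤ dim H_m^d`
    (Y : ℕ → ℕ → MvPolynomial (Fin d) ℝ)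
    (hYhom : ∀ m ℓ, ℓ ∈ Finset.Icc 1 (harmDim d m) → (Y m ℓ).IsHomogeneous m)
    (hYharm : ∀ m ℓ, ℓ ∈ Finset.Icc 1 (harmDim d m) → laplacianLM d (Y m ℓ) = 0)
    (hYorth : ∀ m ℓ m' ℓ', ℓ ∈ Finset.Icc 1 (harmDim d m) →
      ℓ' ∈ Finset.Icc 1 (harmDim d m') →
      (sphArea d)⁻¹ *
        ∫ ξ : Metric.sphere (0 : EuclideanSpace ℝ (Fin d)) 1,
          MvPolynomial.eval (ξ : EuclideanSpace ℝ (Fin d)) (Y m ℓ) *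
          MvPolynomial.eval (ξ : EuclideanSpace ℝ (Fin d)) (Y m' ℓ') ∂(sphMeas d) =
        if m = m' ∧ ℓ = ℓ' then 1 else 0) :
    ∀ n m ℓ n' m' ℓ' : ℕ, m ≤ n → ℓ ∈ Finset.Icc 1 (harmDim d m) →
      m' ≤ n' → ℓ' ∈ Finset.Icc 1 (harmDim d m') →
      (((n, m, ℓ) ≠ (n', m', ℓ')) →
        ∫ t in Set.Ioo (0 : ℝ) 1, (t ^ (((d : ℝ) - 1) / 2) *
          (∫ ξ : Metric.sphere (0 : EuclideanSpace ℝ (Fin d)) 1,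
            ((J (n - m) (α + m + (d - 1) / 2 : ℝ) β).eval (1 - 2 * t) *
              MvPolynomial.eval (Real.sqrt t • (ξ : EuclideanSpace ℝ (Fin d))) (Y m ℓ)) *
            ((J (n' - m') (α + m' + (d - 1) / 2 : ℝ) β).eval (1 - 2 * t) *
              MvPolynomial.eval (Real.sqrt t • (ξ : EuclideanSpace ℝ (Fin d))) (Y m' ℓ'))
            ∂(sphMeas d))) * (t ^ α * (1 - t) ^ β) = 0) ∧
      (0 < ∫ t in Set.Ioo (0 : ℝ) 1, (t ^ (((d : ℝ) - 1) / 2) *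
          (∫ ξ : Metric.sphere (0 : EuclideanSpace ℝ (Fin d)) 1,
            ((J (n - m) (α + m + (d - 1) / 2 : ℝ) β).eval (1 - 2 * t) *
              MvPolynomial.eval (Real.sqrt t • (ξ : EuclideanSpace ℝ (Fin d))) (Y m ℓ)) ^ 2
            ∂(sphMeas d))) * (t ^ α * (1 - t) ^ β)) := by
  intro n m ℓ n' m' ℓ' hmn hℓ hmn' hℓ'
  have hd2 : (2:ℝ) ≤ (d:ℝ) := by exact_mod_cast hd
  have hγ : ∀ k : ℕ, (-1:ℝ) < α + k + ((d:ℝ) - 1)/2 := by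
    intro k
    have h1 : (0:ℝ) ≤ k := Nat.cast_nonneg k
    linarith
  have hdiag := hYorth m ℓ m ℓ hℓ hℓ
  rw [if_pos ⟨rfl, rfl⟩] at hdiag
  have hA0 : sphArea d ≠ 0 := by
    intro h
    rw [h, inv_zero, zero_mul] at hdiag
    exact one_ne_zero hdiag.symm
  have hApos : 0 < sphArea d := lt_of_le_of_ne ENNReal.toReal_nonneg (Ne.symm hA0)
  have sph : ∀ (c1 c2 : ℝ) (t : ℝ) (mm ℓℓ mm' ℓℓ' : ℕ),
      ℓℓ ∈ Finset.Icc 1 (harmDim d mm) → ℓℓ' ∈ Finset.Icc 1 (harmDim d mm') →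
      (∫ ξ : Metric.sphere (0 : EuclideanSpace ℝ (Fin d)) 1,
        (c1 * MvPolynomial.eval (Real.sqrt t • (ξ : EuclideanSpace ℝ (Fin d))) (Y mm ℓℓ)) *
        (c2 * MvPolynomial.eval (Real.sqrt t • (ξ : EuclideanSpace ℝ (Fin d))) (Y mm' ℓℓ'))
        ∂(sphMeas d))
      = (c1 * c2 * (Real.sqrt t ^ mm * Real.sqrt t ^ mm')) *
        (sphArea d * (if mm = mm' ∧ ℓℓ = ℓℓ' then 1 else 0)) := by
    intro c1 c2 t mm ℓℓ mm' ℓℓ' h1 h2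
    have e1 : ∀ ξ : Metric.sphere (0 : EuclideanSpace ℝ (Fin d)) 1,
        (c1 * MvPolynomial.eval (Real.sqrt t • (ξ : EuclideanSpace ℝ (Fin d))) (Y mm ℓℓ)) *
        (c2 * MvPolynomial.eval (Real.sqrt t • (ξ : EuclideanSpace ℝ (Fin d))) (Y mm' ℓℓ'))
        = (c1 * c2 * (Real.sqrt t ^ mm * Real.sqrt t ^ mm')) *
          (MvPolynomial.eval (ξ : EuclideanSpace ℝ (Fin d)) (Y mm ℓℓ) *
           MvPolynomial.eval (ξ : EuclideanSpace ℝ (Fin d)) (Y mm' ℓℓ')) := by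
      intro ξ
      rw [eval_smul_hom' (hYhom mm ℓℓ h1) (Real.sqrt t) (ξ : EuclideanSpace ℝ (Fin d)),
        eval_smul_hom' (hYhom mm' ℓℓ' h2) (Real.sqrt t) (ξ : EuclideanSpace ℝ (Fin d))]
      ring
    have hIval : (∫ ξ : Metric.sphere (0 : EuclideanSpace ℝ (Fin d)) 1,
        MvPolynomial.eval (ξ : EuclideanSpace ℝ (Fin d)) (Y mm ℓℓ) *
        MvPolynomial.eval (ξ : EuclideanSpace ℝ (Fin d)) (Y mm' ℓℓ') ∂(sphMeas d))
        = sphArea d * (if mm = mm' ∧ ℓℓ = ℓℓ' then 1 else 0) := by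
      rw [← hYorth mm ℓℓ mm' ℓℓ' h1 h2]
      rw [← mul_assoc, mul_inv_cancel₀ hA0, one_mul]
    calc (∫ ξ : Metric.sphere (0 : EuclideanSpace ℝ (Fin d)) 1,
        (c1 * MvPolynomial.eval (Real.sqrt t • (ξ : EuclideanSpace ℝ (Fin d))) (Y mm ℓℓ)) *
        (c2 * MvPolynomial.eval (Real.sqrt t • (ξ : EuclideanSpace ℝ (Fin d))) (Y mm' ℓℓ'))
        ∂(sphMeas d))
        = ∫ ξ : Metric.sphere (0 : EuclideanSpace ℝ (Fin d)) 1,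
            (c1 * c2 * (Real.sqrt t ^ mm * Real.sqrt t ^ mm')) *
            (MvPolynomial.eval (ξ : EuclideanSpace ℝ (Fin d)) (Y mm ℓℓ) *
             MvPolynomial.eval (ξ : EuclideanSpace ℝ (Fin d)) (Y mm' ℓℓ')) ∂(sphMeas d) :=
          integral_congr_ae (Filter.Eventually.of_forall e1)
      _ = (c1 * c2 * (Real.sqrt t ^ mm * Real.sqrt t ^ mm')) *
          ∫ ξ : Metric.sphere (0 : EuclideanSpace ℝ (Fin d)) 1,
            MvPolynomial.eval (ξ : EuclideanSpace ℝ (Fin d)) (Y mm ℓℓ) *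
            MvPolynomial.eval (ξ : EuclideanSpace ℝ (Fin d)) (Y mm' ℓℓ') ∂(sphMeas d) :=
          MeasureTheory.integral_const_mul _ _
      _ = _ := by rw [hIval]
  constructor
  · intro hne
    by_cases hml : m = m' ∧ ℓ = ℓ'
    · obtain ⟨hm, hl⟩ := hml
      subst hm; subst hl
      have hnn' : n ≠ n' := by
        intro h
        exact hne (by rw [h])
      have hkk' : n - m ≠ n' - m := fun h => hnn' (by omega)
      have key : Set.EqOn
          (fun t : ℝ => (t ^ (((d : ℝ) - 1) / 2) *
            (∫ ξ : Metric.sphere (0 : EuclideanSpace ℝ (Fin d)) 1,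
              ((J (n - m) (α + m + (d - 1) / 2 : ℝ) β).eval (1 - 2 * t) *
                MvPolynomial.eval (Real.sqrt t • (ξ : EuclideanSpace ℝ (Fin d))) (Y m ℓ)) *
              ((J (n' - m) (α + m + (d - 1) / 2 : ℝ) β).eval (1 - 2 * t) *
                MvPolynomial.eval (Real.sqrt t • (ξ : EuclideanSpace ℝ (Fin d))) (Y m ℓ))
              ∂(sphMeas d))) * (t ^ α * (1 - t) ^ β))
          (fun t : ℝ => sphArea d *
            ((J (n - m) (α + m + (d - 1) / 2 : ℝ) β).eval (1 - 2 * t) *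
             (J (n' - m) (α + m + (d - 1) / 2 : ℝ) β).eval (1 - 2 * t) *
             (t ^ (α + (m:ℝ) + ((d:ℝ) - 1)/2) * (1 - t) ^ β)))
          (Set.Ioo (0:ℝ) 1) := by
        intro t ht
        simp only
        rw [sph _ _ t m ℓ m ℓ hℓ hℓ, if_pos ⟨rfl, rfl⟩]
        have h2 : t ^ (((d:ℝ) - 1)/2) * (t:ℝ) ^ (m:ℕ) * t ^ α
            = t ^ (α + (m:ℝ) + ((d:ℝ) - 1)/2) := by
          rw [← Real.rpow_natCast t m, ← Real.rpow_add ht.1, ← Real.rpow_add ht.1]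
          congr 1
          ring
        calc t ^ (((d : ℝ) - 1) / 2) *
            (((J (n - m) (α + m + (d - 1) / 2 : ℝ) β).eval (1 - 2 * t) *
              (J (n' - m) (α + m + (d - 1) / 2 : ℝ) β).eval (1 - 2 * t) *
              (Real.sqrt t ^ m * Real.sqrt t ^ m)) *
             (sphArea d * 1)) * (t ^ α * (1 - t) ^ β)
            = sphArea d *
              ((J (n - m) (α + m + (d - 1) / 2 : ℝ) β).eval (1 - 2 * t) *
               (J (n' - m) (α + m + (d - 1) / 2 : ℝ) β).eval (1 - 2 * t) *
               ((t ^ (((d:ℝ) - 1)/2) * (Real.sqrt t * Real.sqrt t) ^ m * t ^ α) *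
                (1 - t) ^ β)) := by
              rw [mul_pow]
              ring
          _ = _ := by
              rw [Real.mul_self_sqrt ht.1.le, h2]
      rw [setIntegral_congr_fun measurableSet_Ioo key, MeasureTheory.integral_const_mul,
        orth01' (hγ m) hβ (fun j => J j (α + m + (d - 1) / 2 : ℝ) β)
          (fun j => hJ j _ _ (hγ m) hβ) hkk', mul_zero]
    · have key : Set.EqOn
          (fun t : ℝ => (t ^ (((d : ℝ) - 1) / 2) *
            (∫ ξ : Metric.sphere (0 : EuclideanSpace ℝ (Fin d)) 1,
              ((J (n - m) (α + m + (d - 1) / 2 : ℝ) β).eval (1 - 2 * t) *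
                MvPolynomial.eval (Real.sqrt t • (ξ : EuclideanSpace ℝ (Fin d))) (Y m ℓ)) *
              ((J (n' - m') (α + m' + (d - 1) / 2 : ℝ) β).eval (1 - 2 * t) *
                MvPolynomial.eval (Real.sqrt t • (ξ : EuclideanSpace ℝ (Fin d))) (Y m' ℓ'))
              ∂(sphMeas d))) * (t ^ α * (1 - t) ^ β))
          (fun _ : ℝ => (0:ℝ)) (Set.Ioo (0:ℝ) 1) := by
        intro t ht
        simp only
        rw [sph _ _ t m ℓ m' ℓ' hℓ hℓ', if_neg hml]
        ring
      rw [setIntegral_congr_fun measurableSet_Ioo key, integral_zero]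
  · have hpne : J (n - m) (α + m + (d - 1) / 2 : ℝ) β ≠ 0 := by
      have hdeg := (hJ (n - m) (α + m + (d - 1) / 2 : ℝ) β (hγ m) hβ).1
      intro h
      rw [h, Polynomial.degree_zero] at hdeg
      exact absurd hdeg (by simp)
    have key : Set.EqOn
        (fun t : ℝ => (t ^ (((d : ℝ) - 1) / 2) *
          (∫ ξ : Metric.sphere (0 : EuclideanSpace ℝ (Fin d)) 1,
            ((J (n - m) (α + m + (d - 1) / 2 : ℝ) β).eval (1 - 2 * t) *
              MvPolynomial.eval (Real.sqrt t • (ξ : EuclideanSpace ℝ (Fin d))) (Y m ℓ)) ^ 2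
            ∂(sphMeas d))) * (t ^ α * (1 - t) ^ β))
        (fun t : ℝ => sphArea d *
          (((J (n - m) (α + m + (d - 1) / 2 : ℝ) β).eval (1 - 2 * t)) ^ 2 *
           (t ^ (α + (m:ℝ) + ((d:ℝ) - 1)/2) * (1 - t) ^ β)))
        (Set.Ioo (0:ℝ) 1) := by
      intro t ht
      simp only [pow_two]
      rw [sph _ _ t m ℓ m ℓ hℓ hℓ, if_pos ⟨rfl, rfl⟩]
      have h2 : t ^ (((d:ℝ) - 1)/2) * (t:ℝ) ^ (m:ℕ) * t ^ α
          = t ^ (α + (m:ℝ) + ((d:ℝ) - 1)/2) := by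
        rw [← Real.rpow_natCast t m, ← Real.rpow_add ht.1, ← Real.rpow_add ht.1]
        congr 1
        ring
      calc t ^ (((d : ℝ) - 1) / 2) *
          (((J (n - m) (α + m + (d - 1) / 2 : ℝ) β).eval (1 - 2 * t) *
            (J (n - m) (α + m + (d - 1) / 2 : ℝ) β).eval (1 - 2 * t) *
            (Real.sqrt t ^ m * Real.sqrt t ^ m)) *
           (sphArea d * 1)) * (t ^ α * (1 - t) ^ β)
          = sphArea d *
            ((J (n - m) (α + m + (d - 1) / 2 : ℝ) β).eval (1 - 2 * t) *
             (J (n - m) (α + m + (d - 1) / 2 : ℝ) β).eval (1 - 2 * t) *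
             ((t ^ (((d:ℝ) - 1)/2) * (Real.sqrt t * Real.sqrt t) ^ m * t ^ α) *
              (1 - t) ^ β)) := by
            rw [mul_pow]
            ring
        _ = _ := by
            rw [Real.mul_self_sqrt ht.1.le, h2]
    rw [setIntegral_congr_fun measurableSet_Ioo key, MeasureTheory.integral_const_mul]
    exact mul_pos hApos (pos01 (hγ m) hβ hpne)
end
end
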